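/- arXiv:1102.1398 — 6 statements merged into one kernel-verified Lean document; each statement's English description precedes it below -/
import Mathlib

section
/- Let δ_0 = δ and δ_{t+1} = P(Binomial(d, δ_t) ≥ d/2) with d ≥ 5 and δ sufficiently small (δ < (2e·d/(d-2))^{-d/(d-4)} suffices). Then -log δ_t ∈ Ω((d/2)^t); in particular, to achieve δ_t ≤ ε it suffices to take t = O(log log(1/ε)). -/
/-!
Keeping only the terms with `j ≥ m := ⌈d/2⌉` and bounding `∑ choose d j` by `2^d` gives
`δ_{t+1} ≤ 2^d δ_t^m`, i.e. `y_{t+1} ≥ m y_t - d log 2` for `y_t = -log δ_t`. The affine map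
`y ↦ m y - d log 2` has the repelling fixed point `a = d log 2 / (m - 1)`, so
`y_t - a ≥ m^t (y_0 - a) ≥ (d/2)^t (y_0 - a)`, and the smallness of `δ` makes `y_0 > a`.
Inverting, `t = ⌈log_{d/2} ((log (1/ε) + 2) / (y_0 - a))⌉` steps give `δ_t ≤ ε`.
-/

open Real Finset

/-- The upper tail `P(Binomial(n,p) ≥ k)` of a binomial random variable. -/
noncomputable def binTail (n : ℕ) (p : ℝ) (k : ℝ) : ℝ :=
  ∑ j ∈ Finset.range (n + 1),
    if k ≤ (j : ℝ) then (n.choose j : ℝ) * p ^ j * (1 - p) ^ (n - j) else 0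

section binTail

variable {n : ℕ} {p k : ℝ} {x : ℕ → ℝ}

lemma binTail_pos (hp₀ : 0 < p) (hp₁ : p ≤ 1) (hk : k ≤ n) : 0 < binTail n p k := by
  have h1p : 0 ≤ 1 - p := by linarith
  refine sum_pos' (fun j _ => by split_ifs <;> positivity) ⟨n, self_mem_range_succ n, ?_⟩
  simpa [if_pos hk] using pow_pos hp₀ n

lemma binTail_le_one (hp₀ : 0 ≤ p) (hp₁ : p ≤ 1) : binTail n p k ≤ 1 := by
  have h1p : 0 ≤ 1 - p := by linarith
  calc binTail n p k ≤ ∑ j ∈ range (n + 1), p ^ j * (1 - p) ^ (n - j) * n.choose j := by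
        unfold binTail
        gcongr with j
        split_ifs
        · exact (mul_rotate _ _ _).le
        · positivity
    _ = 1 := by rw [← add_pow, add_sub_cancel, one_pow]

lemma binTail_le_two_pow_mul_pow_ceil (hp₀ : 0 ≤ p) (hp₁ : p ≤ 1) :
    binTail n p k ≤ 2 ^ n * p ^ ⌈k⌉₊ := by
  have h1p : 0 ≤ 1 - p := by linarith
  calc binTail n p k ≤ ∑ j ∈ range (n + 1), (n.choose j : ℝ) * p ^ ⌈k⌉₊ := by
        unfold binTail
        gcongr with j
        split_ifs with hkj
        · calc (n.choose j : ℝ) * p ^ j * (1 - p) ^ (n - j)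
              ≤ (n.choose j : ℝ) * p ^ ⌈k⌉₊ * 1 := by
                refine mul_le_mul (mul_le_mul_of_nonneg_left ?_ (by positivity)) ?_
                  (by positivity) (by positivity)
                · exact pow_le_pow_of_le_one hp₀ hp₁ (Nat.ceil_le.2 hkj)
                · exact pow_le_one₀ h1p (by linarith)
            _ = (n.choose j : ℝ) * p ^ ⌈k⌉₊ := mul_one _
        · positivity
    _ = 2 ^ n * p ^ ⌈k⌉₊ := by
      rw [← sum_mul, ← Nat.cast_sum, Nat.sum_range_choose, Nat.cast_pow, Nat.cast_ofNat]

lemma le_neg_log_binTail (hp₀ : 0 < p) (hp₁ : p ≤ 1) (hk : k ≤ n) :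
    ⌈k⌉₊ * -log p - n * log 2 ≤ -log (binTail n p k) := by
  have h := log_le_log (binTail_pos hp₀ hp₁ hk) (binTail_le_two_pow_mul_pow_ceil hp₀.le hp₁)
  rw [log_mul (by positivity) (by positivity), log_pow, log_pow] at h
  linarith

lemma binTail_iterate_mem_Ioc (hk : k ≤ n) (h0 : x 0 ∈ Set.Ioc 0 1)
    (hrec : ∀ t, x (t + 1) = binTail n (x t) k) (t : ℕ) : x t ∈ Set.Ioc 0 1 := by
  induction t with
  | zero => exact h0
  | succ t ih => rw [hrec]; exact ⟨binTail_pos ih.1 ih.2 hk, binTail_le_one ih.1.le ih.2⟩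

lemma ceil_pow_mul_le_neg_log_binTail_iterate (hk : k ≤ n) (hk₁ : 1 < k)
    (h0 : x 0 ∈ Set.Ioc 0 1) (hrec : ∀ t, x (t + 1) = binTail n (x t) k) (t : ℕ) :
    (⌈k⌉₊ : ℝ) ^ t * (-log (x 0) - n * log 2 / (⌈k⌉₊ - 1))
      ≤ -log (x t) - n * log 2 / (⌈k⌉₊ - 1) := by
  have hm : (1 : ℝ) < ⌈k⌉₊ := Nat.one_lt_cast.2 (Nat.lt_ceil.2 (by exact_mod_cast hk₁))
  refine geom_le (u := fun t => -log (x t) - n * log 2 / (⌈k⌉₊ - 1)) (Nat.cast_nonneg _) t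
    fun s _ => ?_
  have hx := binTail_iterate_mem_Ioc hk h0 hrec s
  have hstep := le_neg_log_binTail hx.1 hx.2 hk
  rw [← hrec] at hstep
  have hfix :
      (⌈k⌉₊ : ℝ) * (n * log 2 / (⌈k⌉₊ - 1)) - n * log 2 / (⌈k⌉₊ - 1) = n * log 2 := by
    rw [← sub_one_mul, mul_div_cancel₀ _ (sub_pos.2 hm).ne']
  linarith

end binTail

lemma exists_le_of_mul_pow_le_neg_log {x : ℕ → ℝ} {A q : ℝ} (hA : 0 < A) (hq : 1 < q)
    (h : ∀ t, A * q ^ t ≤ -log (x t)) :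
    ∃ C > (0 : ℝ), ∀ ε : ℝ, 0 < ε → ε < 1 → ∃ t : ℕ,
      x t ≤ ε ∧ (t : ℝ) ≤ C * log (log (1 / ε) + 2) + C := by
  have hlogq : 0 < log q := log_pos hq
  refine ⟨(1 + |log A|) / log q + 1, by positivity, fun ε hε₀ hε₁ => ?_⟩
  set L := log (1 / ε)
  have hL : 0 < L := log_pos (one_lt_one_div hε₀ hε₁)
  have hlogL : 0 ≤ log (L + 2) := log_nonneg (by linarith)
  set s := logb q ((L + 2) / A)
  refine ⟨⌈s⌉₊, ?_, ?_⟩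
  · have hqt : (L + 2) / A ≤ q ^ ⌈s⌉₊ := by
      calc (L + 2) / A = q ^ s := (rpow_logb (by linarith) hq.ne' (by positivity)).symm
        _ ≤ q ^ (⌈s⌉₊ : ℝ) := rpow_le_rpow_of_exponent_le hq.le (Nat.le_ceil s)
        _ = q ^ ⌈s⌉₊ := rpow_natCast q _
    have hlog : -log ε ≤ -log (x ⌈s⌉₊) := by
      calc -log ε = L := by simp only [L, one_div, log_inv]
        _ ≤ L + 2 := by linarith
        _ ≤ A * q ^ ⌈s⌉₊ := (div_le_iff₀' hA).1 hqt
        _ ≤ -log (x ⌈s⌉₊) := h _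
    rcases le_or_gt (x ⌈s⌉₊) 0 with hx | hx
    · linarith
    · exact (log_le_log_iff hx hε₀).1 (by linarith)
  · have hs : |s| ≤ (log (L + 2) + |log A|) / log q := by
      rw [show s = log ((L + 2) / A) / log q from rfl, log_div (by linarith) hA.ne', abs_div,
        abs_of_pos hlogq]
      gcongr
      exact (abs_sub _ _).trans (by rw [abs_of_nonneg hlogL])
    have hceil : (⌈s⌉₊ : ℝ) ≤ |s| + 1 :=
      (Nat.cast_le.2 (Nat.ceil_le_ceil (le_abs_self s))).trans
        (Nat.ceil_lt_add_one (abs_nonneg s)).le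
    calc (⌈s⌉₊ : ℝ) ≤ (log (L + 2) + |log A|) / log q + 1 := by linarith
      _ ≤ ((1 + |log A|) / log q + 1) * log (L + 2) + ((1 + |log A|) / log q + 1) := by
        field_simp
        nlinarith [mul_nonneg hlogL (abs_nonneg (log A)), mul_nonneg hlogL hlogq.le]

lemma mul_log_two_div_lt_neg_log {d : ℕ} (hd : 5 ≤ d) {δ : ℝ} (hδpos : 0 < δ)
    (hδsmall : δ < (2 * exp 1 * d / (d - 2)) ^ (-(d : ℝ) / (d - 4))) :
    d * log 2 / (⌈(d : ℝ) / 2⌉₊ - 1) < -log δ := by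
  have hdR : (5 : ℝ) ≤ d := by exact_mod_cast hd
  have hm : (d : ℝ) / 2 ≤ ⌈(d : ℝ) / 2⌉₊ := Nat.le_ceil _
  have hX : 4 ≤ 2 * exp 1 * d / (d - 2) := by
    rw [le_div_iff₀ (by linarith)]
    nlinarith [add_one_le_exp (1 : ℝ)]
  calc d * log 2 / (⌈(d : ℝ) / 2⌉₊ - 1) ≤ d * log 2 / ((d - 4) / 2) :=
        div_le_div_of_nonneg_left (by positivity) (by linarith) (by linarith)
    _ = d / (d - 4) * log 4 := by
        rw [show (4 : ℝ) = 2 ^ 2 by norm_num, log_pow]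
        field_simp
        ring
    _ ≤ d / (d - 4) * log (2 * exp 1 * d / (d - 2)) :=
        mul_le_mul_of_nonneg_left (log_le_log (by norm_num) hX)
          (div_nonneg (by linarith) (by linarith))
    _ = -log ((2 * exp 1 * d / (d - 2)) ^ (-(d : ℝ) / (d - 4))) := by
        rw [log_rpow (by linarith)]
        ring
    _ < -log δ := neg_lt_neg (log_lt_log hδpos hδsmall)

/-- For the directed-tree error recursion `δ_{t+1} = P(Binomial(d, δ_t) ≥ d/2)`
with `d ≥ 5` and `δ` sufficiently small (`δ < (2e·d/(d-2))^{-d/(d-4)}`),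
`-log δ_t ∈ Ω((d/2)^t)`; in particular `t = O(log log(1/ε))` iterations
suffice to achieve error probability `δ_t ≤ ε`. -/
theorem directed_tree_doubly_exponential (d : ℕ) (hd : 5 ≤ d) (δ : ℝ)
    (hδpos : 0 < δ)
    (hδsmall : δ < (2 * Real.exp 1 * (d : ℝ) / ((d : ℝ) - 2)) ^
      (-(d : ℝ) / ((d : ℝ) - 4)))
    (δseq : ℕ → ℝ) (h0 : δseq 0 = δ)
    (hrec : ∀ t, δseq (t + 1) = binTail d (δseq t) ((d : ℝ) / 2)) :
    (∃ A > (0 : ℝ), ∃ B ≥ (0 : ℝ), ∀ t : ℕ,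
        A * ((d : ℝ) / 2) ^ t - B ≤ -Real.log (δseq t)) ∧
    (∃ C > (0 : ℝ), ∀ ε : ℝ, 0 < ε → ε < 1 → ∃ t : ℕ,
        δseq t ≤ ε ∧ (t : ℝ) ≤ C * Real.log (Real.log (1 / ε) + 2) + C) := by
  have hdR : (5 : ℝ) ≤ d := by exact_mod_cast hd
  set m := ⌈(d : ℝ) / 2⌉₊
  set a := d * log 2 / (m - 1)
  have hm : (d : ℝ) / 2 ≤ m := Nat.le_ceil _
  have ha : 0 ≤ a := div_nonneg (by positivity) (by linarith)
  have hA : 0 < -log δ - a := sub_pos.2 (mul_log_two_div_lt_neg_log hd hδpos hδsmall)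
  have hδ₁ : δ ≤ 1 := ((log_neg_iff hδpos).1 (by linarith)).le
  have hgrowth : ∀ t, (-log δ - a) * ((d : ℝ) / 2) ^ t ≤ -log (δseq t) := fun t => by
    have h := ceil_pow_mul_le_neg_log_binTail_iterate (by linarith) (by linarith)
      (h0 ▸ ⟨hδpos, hδ₁⟩) hrec t
    rw [h0] at h
    calc (-log δ - a) * ((d : ℝ) / 2) ^ t ≤ (m : ℝ) ^ t * (-log δ - a) := by
          rw [mul_comm]
          gcongr
      _ ≤ -log (δseq t) := by linarith
  exact ⟨⟨_, hA, 0, le_rfl, fun t => by linarith [hgrowth t]⟩,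
    exists_le_of_mul_pow_le_neg_log hA (by linarith) hgrowth⟩
end

section
/- Consider a process on a finite tree where each agent i has private signal x_i and deterministic update functions g_i^t, and the coupled 'zombie' process where agent i's trajectory is replaced by a fixed sequence τ_i and the state of the world is fixed to s, with the same private signals. Then on the event that τ_i^t = g_i^t(x_i, σ_{∂i}^{t-1}) (the zombie's actions coincide with the rational actions), the trajectories of all other agents up to time t are identical in the two processes; consequently P(σ_{∂i}^{t-1} = ω | s, x_i)·1[τ_i^t = g_i^t(x_i, ω)] = Q(σ_{∂i}^{t-1} = ω | τ_i, s)·1[τ_i^t = g_i^t(x_i, ω)] for every ω. -/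
/-!
Fix the signal profile `x` with `x i = ξ`. At every agent other than `i` the rational process `σ`
and the zombie process `ζ` obey the same local update rule, and at `i` the zombie plays `τ`, which
by consistency is what `i` would play if its neighbours acted according to `ω`. So as long as the
neighbours of `i` act according to `ω` in either process, strong induction on time shows that the
two processes coincide at every agent. Hence the events "the neighbours of `i` act according to `ω`
before time `t`" are the same in both processes, and the two sums agree summand by summand.
-/

theorem eq_zombie_of_consistent {V X A : Type*} [DecidableEq V] {G : SimpleGraph V}
    {upd : V → X → (V → ℕ → A) → ℕ → A}
    (hloc : ∀ v xv (h h' : V → ℕ → A) (t : ℕ),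
      (∀ j, G.Adj v j ∨ j = v → ∀ t' < t, h j t' = h' j t') →
      upd v xv h t = upd v xv h' t)
    {x : V → X} {i : V} {τ : ℕ → A} {ω σ ζ : V → ℕ → A} {t : ℕ}
    (hσ : ∀ v t, σ v t = upd v (x v) σ t)
    (hζi : ∀ t, ζ i t = τ t) (hζ : ∀ v t, v ≠ i → ζ v t = upd v (x v) ζ t)
    (hτ : ∀ t' < t, τ t' = upd i (x i) (fun j t'' => if j = i then τ t'' else ω j t'') t')
    (hω : ∀ j, G.Adj i j → ∀ t' < t, σ j t' = ω j t' ∨ ζ j t' = ω j t') :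
    ∀ t' < t, ∀ v, σ v t' = ζ v t' := by
  intro t' ht'
  induction t' using Nat.strong_induction_on with
  | _ t' ih =>
  have hpast : ∀ v, ∀ s < t', σ v s = ζ v s := fun v s hs => ih s hs (hs.trans ht') v
  intro v
  rcases eq_or_ne v i with rfl | hv
  · rw [hσ, hζi, hτ t' ht']
    refine hloc _ _ _ _ _ fun j hj s hs => ?_
    rcases hj with hj | rfl
    · rw [if_neg (G.ne_of_adj hj).symm]
      exact (hω j hj s (hs.trans ht')).elim id (hpast j s hs).trans
    · rw [if_pos rfl, hpast j s hs, hζi]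
  · rw [hσ, hζ v t' hv]
    exact hloc _ _ _ _ _ fun j _ s hs => hpast j s hs

theorem neighbors_eq_iff_zombie {V X A : Type*} [DecidableEq V] {G : SimpleGraph V}
    {upd : V → X → (V → ℕ → A) → ℕ → A}
    (hloc : ∀ v xv (h h' : V → ℕ → A) (t : ℕ),
      (∀ j, G.Adj v j ∨ j = v → ∀ t' < t, h j t' = h' j t') →
      upd v xv h t = upd v xv h' t)
    {x : V → X} {i : V} {τ : ℕ → A} {ω σ ζ : V → ℕ → A} {t : ℕ}
    (hσ : ∀ v t, σ v t = upd v (x v) σ t)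
    (hζi : ∀ t, ζ i t = τ t) (hζ : ∀ v t, v ≠ i → ζ v t = upd v (x v) ζ t)
    (hτ : ∀ t' < t, τ t' = upd i (x i) (fun j t'' => if j = i then τ t'' else ω j t'') t') :
    (∀ j, G.Adj i j → ∀ t' < t, σ j t' = ω j t') ↔
      (∀ j, G.Adj i j → ∀ t' < t, ζ j t' = ω j t') := by
  constructor
  · intro h j hj s hs
    have hσζ := eq_zombie_of_consistent hloc hσ hζi hζ hτ fun j hj s hs => .inl (h j hj s hs)
    exact (hσζ s hs j).symm.trans (h j hj s hs)
  · intro h j hj s hs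
    have hσζ := eq_zombie_of_consistent hloc hσ hζi hζ hτ fun j hj s hs => .inr (h j hj s hs)
    exact (hσζ s hs j).trans (h j hj s hs)

theorem zombie_coupling_general {V X A : Type*} [Fintype V] [DecidableEq V]
    [Fintype X] [DecidableEq X] [DecidableEq A]
    (G : SimpleGraph V) [DecidableRel G.Adj]
    (upd : V → X → (V → ℕ → A) → ℕ → A)
    (hloc : ∀ v xv (h h' : V → ℕ → A) (t : ℕ),
      (∀ j, G.Adj v j ∨ j = v → ∀ t' < t, h j t' = h' j t') →
      upd v xv h t = upd v xv h' t)
    (traj : (V → X) → V → ℕ → A)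
    (htraj : ∀ x v t, traj x v t = upd v (x v) (fun j t' => traj x j t') t)
    (i : V) (τ : ℕ → A)
    (ztraj : (V → X) → V → ℕ → A)
    (hz1 : ∀ x t, ztraj x i t = τ t)
    (hz2 : ∀ x v t, v ≠ i →
      ztraj x v t = upd v (x v) (fun j t' => ztraj x j t') t)
    (ν : V → X → ℝ)
    (ξ : X) (ω : V → ℕ → A) (t : ℕ)
    (hconsistent : ∀ t' ≤ t, τ t' =
      upd i ξ (fun j t'' => if j = i then τ t'' else ω j t'') t') :
    (∑ x : V → X,
        if x i = ξ ∧ ∀ j ∈ G.neighborFinset i, ∀ t' < t, traj x j t' = ω j t'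
        then ∏ v ∈ Finset.univ.erase i, ν v (x v) else 0) =
    (∑ x : V → X,
        if x i = ξ ∧ ∀ j ∈ G.neighborFinset i, ∀ t' < t, ztraj x j t' = ω j t'
        then ∏ v ∈ Finset.univ.erase i, ν v (x v) else 0) := by
  refine Finset.sum_congr rfl fun x _ => if_congr (and_congr_right fun hξ => ?_) rfl rfl
  subst hξ
  simp only [SimpleGraph.mem_neighborFinset]
  exact neighbors_eq_iff_zombie hloc (htraj x) (hz1 x) (hz2 x) fun t' ht' => hconsistent t' ht'.le

/-- Coupling of the original process and the `zombie` process on a tree: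
on the event that the zombie's fixed trajectory `τ` coincides with the
rational actions `g_i^t(x_i, σ_{∂i}^{t-1})`, the conditional law (given `s`
and `x_i = ξ`) of the neighbors' trajectories in the original process equals
their law in the zombie process. Here `traj` is the original deterministic
dynamics, `ztraj` the dynamics with agent `i` replaced by a zombie playing
`τ`, `ν v` the conditional private-signal distribution (given the fixed true
state `s`), and probabilities are sums of products of signal weights. -/
theorem zombie_coupling {V X A : Type*} [Fintype V] [DecidableEq V]
    [Fintype X] [DecidableEq X] [DecidableEq A]
    (G : SimpleGraph V) [DecidableRel G.Adj] (htree : G.IsTree)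
    (upd : V → X → (V → ℕ → A) → ℕ → A)
    (hloc : ∀ v xv (h h' : V → ℕ → A) (t : ℕ),
      (∀ j, G.Adj v j ∨ j = v → ∀ t' < t, h j t' = h' j t') →
      upd v xv h t = upd v xv h' t)
    (traj : (V → X) → V → ℕ → A)
    (htraj : ∀ x v t, traj x v t = upd v (x v) (fun j t' => traj x j t') t)
    (i : V) (τ : ℕ → A)
    (ztraj : (V → X) → V → ℕ → A)
    (hz1 : ∀ x t, ztraj x i t = τ t)
    (hz2 : ∀ x v t, v ≠ i →
      ztraj x v t = upd v (x v) (fun j t' => ztraj x j t') t)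
    (ν : V → X → ℝ) (hν : ∀ v χ, 0 ≤ ν v χ) (hν1 : ∀ v, ∑ χ, ν v χ = 1)
    (ξ : X) (ω : V → ℕ → A) (t : ℕ)
    (hconsistent : ∀ t' ≤ t, τ t' =
      upd i ξ (fun j t'' => if j = i then τ t'' else ω j t'') t') :
    (∑ x : V → X,
        if x i = ξ ∧ ∀ j ∈ G.neighborFinset i, ∀ t' < t, traj x j t' = ω j t'
        then ∏ v ∈ Finset.univ.erase i, ν v (x v) else 0) =
    (∑ x : V → X,
        if x i = ξ ∧ ∀ j ∈ G.neighborFinset i, ∀ t' < t, ztraj x j t' = ω j t'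
        then ∏ v ∈ Finset.univ.erase i, ν v (x v) else 0) :=
  zombie_coupling_general G upd hloc traj htraj i τ ztraj hz1 hz2 ν ξ ω t hconsistent
end

section
/- In the modified ('zombie') process on a tree, where agent i's trajectory is fixed to τ_i and the state of the world is fixed to s, the trajectories of i's neighbors up to time t are mutually independent: Q(σ_{∂i}^t | τ_i, s) = ∏_{j ∈ ∂i} Q(σ_j^t | τ_i^t, s). -/
/-!
The signals of different branches of the tree at `i` are independent, and in the zombie process
the trajectory of a neighbour `j` of `i` is a function of the signals in `j`'s branch only: by
induction on time, a vertex of the branch updates from its own signal, from neighbours in the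
same branch, and from `i`, whose trajectory is frozen to `τ`. A product weight factorises over
functions of disjoint sets of coordinates, which gives the product formula.
-/

open Finset

section ProductWeight

variable {V X : Type*} [Fintype V] [DecidableEq V] [Fintype X] {ν : V → X → ℝ}

theorem sum_prod_weight_eq_one (hν1 : ∀ v, ∑ χ, ν v χ = 1) :
    ∑ x : V → X, ∏ v, ν v (x v) = 1 := by
  rw [← Fintype.prod_sum]
  exact prod_eq_one fun v _ => hν1 v

/-- Swapping the coordinates in `s` between two configurations preserves the product of their
weights, and the swapped pair carries `f` of the first and `g` of the second onto a single
configuration. -/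
theorem sum_mul_mul_prod_weight_eq_mul (hν1 : ∀ v, ∑ χ, ν v χ = 1) (s : Set V)
    [DecidablePred (· ∈ s)] {f g : (V → X) → ℝ} (hf : DependsOn f s) (hg : DependsOn g sᶜ) :
    ∑ x : V → X, f x * g x * ∏ v, ν v (x v) =
      (∑ x : V → X, f x * ∏ v, ν v (x v)) * ∑ x : V → X, g x * ∏ v, ν v (x v) := by
  let swap : (V → X) × (V → X) → (V → X) × (V → X) := fun p =>
    (s.piecewise p.1 p.2, s.piecewise p.2 p.1)
  have swap_involutive : Function.Involutive swap := fun p => by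
    ext v <;> by_cases hv : v ∈ s <;> simp [swap, Set.piecewise, hv]
  have weight_swap : ∀ p : (V → X) × (V → X),
      (∏ v, ν v (p.1 v)) * ∏ v, ν v (p.2 v) =
        (∏ v, ν v ((swap p).1 v)) * ∏ v, ν v ((swap p).2 v) := fun p => by
    simp only [← prod_mul_distrib]
    refine prod_congr rfl fun v _ => ?_
    by_cases hv : v ∈ s <;> simp [swap, Set.piecewise, hv, mul_comm]
  have hf_swap : ∀ p, f (swap p).1 = f p.1 :=
    fun p => hf fun v hv => Set.piecewise_eq_of_mem s _ _ hv
  have hg_swap : ∀ p, g (swap p).1 = g p.2 :=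
    fun p => hg fun v hv => Set.piecewise_eq_of_notMem s _ _ hv
  calc ∑ x : V → X, f x * g x * ∏ v, ν v (x v)
      = ∑ p : (V → X) × (V → X),
          f p.1 * g p.1 * (∏ v, ν v (p.1 v)) * ∏ v, ν v (p.2 v) := by
        rw [Fintype.sum_prod_type, ← mul_one (∑ x : V → X, _), ← sum_prod_weight_eq_one hν1,
          sum_mul_sum]
    _ = ∑ p : (V → X) × (V → X),
          f (swap p).1 * g (swap p).1 * (∏ v, ν v ((swap p).1 v)) * ∏ v, ν v ((swap p).2 v) :=
        (Equiv.sum_comp swap_involutive.toPerm _).symm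
    _ = ∑ p : (V → X) × (V → X), f p.1 * (∏ v, ν v (p.1 v)) * (g p.2 * ∏ v, ν v (p.2 v)) := by
        refine Fintype.sum_congr _ _ fun p => ?_
        rw [hf_swap, hg_swap, mul_assoc _ (∏ v, _), ← weight_swap]
        ring
    _ = _ := by rw [Fintype.sum_prod_type, sum_mul_sum]

theorem sum_prod_mul_prod_weight_eq_prod {ι : Type*} [DecidableEq ι]
    (hν1 : ∀ v, ∑ χ, ν v χ = 1) (J : Finset ι) (S : ι → Set V)
    (hS : (J : Set ι).PairwiseDisjoint S) (f : ι → (V → X) → ℝ)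
    (hf : ∀ j ∈ J, DependsOn (f j) (S j)) :
    ∑ x : V → X, (∏ j ∈ J, f j x) * ∏ v, ν v (x v) =
      ∏ j ∈ J, ∑ x : V → X, f j x * ∏ v, ν v (x v) := by
  classical
  induction J using Finset.induction_on with
  | empty => simpa using sum_prod_weight_eq_one hν1
  | @insert a J haJ ih =>
    have hS' : (J : Set ι).PairwiseDisjoint S := hS.subset (by simp)
    have hrest : DependsOn (fun x => ∏ j ∈ J, f j x) (S a)ᶜ := fun x y hxy =>
      prod_congr rfl fun j hj => hf j (mem_insert_of_mem hj) fun v hv =>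
        hxy v fun hva =>
          (hS (by simp) (by simp [hj]) (ne_of_mem_of_not_mem hj haJ).symm).ne_of_mem hva hv rfl
    simp only [prod_insert haJ, ← ih hS' fun j hj => hf j (mem_insert_of_mem hj)]
    rw [← sum_mul_mul_prod_weight_eq_mul hν1 (S a) (hf a (mem_insert_self a J)) hrest]

end ProductWeight

namespace SimpleGraph

variable {V : Type*} {G : SimpleGraph V}

def branch (G : SimpleGraph V) (i j : V) : Set V :=
  {v | ∃ w : G.Walk j v, i ∉ w.support}

theorem notMem_branch (G : SimpleGraph V) (i j : V) : i ∉ G.branch i j :=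
  fun ⟨w, hw⟩ => hw w.end_mem_support

theorem self_mem_branch {i j : V} (h : j ≠ i) : j ∈ G.branch i j :=
  ⟨.nil, by simpa using h.symm⟩

theorem mem_branch_of_adj {i j u w : V} (hu : u ∈ G.branch i j) (hadj : G.Adj u w) (hw : w ≠ i) :
    w ∈ G.branch i j := by
  obtain ⟨p, hp⟩ := hu
  exact ⟨p.concat hadj, by simpa [Walk.support_concat, hp] using hw.symm⟩

/-- Two branches at `i` through neighbours `j`, `j'` that meet give a path `i, j, …, j'`; in an
acyclic graph it must be the edge `i j'`, so `j = j'`. -/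
theorem IsAcyclic.eq_of_mem_branch (hG : G.IsAcyclic) {i j j' v : V}
    (hj : G.Adj i j) (hj' : G.Adj i j') (hv : v ∈ G.branch i j) (hv' : v ∈ G.branch i j') :
    j = j' := by
  classical
  obtain ⟨w, hw⟩ := hv
  obtain ⟨w', hw'⟩ := hv'
  let p := w.append w'.reverse
  have hip : i ∉ p.bypass.support := fun h => by
    simpa [p, Walk.mem_support_append_iff, hw, hw'] using Walk.support_bypass_subset_support _ h
  have := hG.eq_snd_of_adj_start (p.bypass_isPath.cons hip (h := hj)) hj' (Walk.end_mem_support _)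
  simpa using this.symm

theorem IsAcyclic.pairwiseDisjoint_branch (hG : G.IsAcyclic) (i : V) :
    (G.neighborSet i).PairwiseDisjoint (G.branch i) :=
  fun _ hj _ hj' hne => Set.disjoint_left.2 fun _ hv hv' => hne (hG.eq_of_mem_branch hj hj' hv hv')

end SimpleGraph

theorem zombie_dependsOn {V X A : Type*} (G : SimpleGraph V)
    (upd : V → X → (V → ℕ → A) → ℕ → A)
    (hloc : ∀ v xv (h h' : V → ℕ → A) (t : ℕ),
      (∀ j, G.Adj v j ∨ j = v → ∀ t' < t, h j t' = h' j t') →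
      upd v xv h t = upd v xv h' t)
    (i : V) (τ : ℕ → A) (ztraj : (V → X) → V → ℕ → A)
    (hz1 : ∀ x t, ztraj x i t = τ t)
    (hz2 : ∀ x v t, v ≠ i → ztraj x v t = upd v (x v) (fun j t' => ztraj x j t') t)
    {R : Set V} (hiR : i ∉ R) (hR : ∀ u ∈ R, ∀ w, G.Adj u w → w ≠ i → w ∈ R) (t : ℕ) :
    ∀ v ∈ R, DependsOn (fun x => ztraj x v t) R := by
  induction t using Nat.strong_induction_on with
  | _ t ih =>
    intro v hv x y hxy
    have hvi : v ≠ i := ne_of_mem_of_not_mem hv hiR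
    show ztraj x v t = ztraj y v t
    rw [hz2 x v t hvi, hz2 y v t hvi, hxy v hv]
    refine hloc _ _ _ _ _ fun u hu t' ht' => ?_
    rcases hu with hadj | rfl
    · by_cases hui : u = i
      · simp only [hui, hz1]
      · exact ih t' ht' u (hR v hv u hadj hui) hxy
    · exact ih t' ht' u hv hxy

theorem zombie_neighbor_independence_general {V X A : Type*} [Fintype V] [DecidableEq V]
    [Fintype X] [DecidableEq A]
    (G : SimpleGraph V) [DecidableRel G.Adj] (htree : G.IsTree)
    (upd : V → X → (V → ℕ → A) → ℕ → A)
    (hloc : ∀ v xv (h h' : V → ℕ → A) (t : ℕ),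
      (∀ j, G.Adj v j ∨ j = v → ∀ t' < t, h j t' = h' j t') →
      upd v xv h t = upd v xv h' t)
    (i : V) (τ : ℕ → A)
    (ztraj : (V → X) → V → ℕ → A)
    (hz1 : ∀ x t, ztraj x i t = τ t)
    (hz2 : ∀ x v t, v ≠ i →
      ztraj x v t = upd v (x v) (fun j t' => ztraj x j t') t)
    (ν : V → X → ℝ) (hν1 : ∀ v, ∑ χ, ν v χ = 1)
    (ω : V → ℕ → A) (t : ℕ) :
    (∑ x : V → X,
        if ∀ j ∈ G.neighborFinset i, ∀ t' ≤ t, ztraj x j t' = ω j t'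
        then ∏ v, ν v (x v) else 0) =
    ∏ j ∈ G.neighborFinset i,
      (∑ x : V → X,
        if ∀ t' ≤ t, ztraj x j t' = ω j t'
        then ∏ v, ν v (x v) else 0) := by
  have hdep : ∀ j ∈ G.neighborFinset i, DependsOn
      (fun x => if ∀ t' ≤ t, ztraj x j t' = ω j t' then (1 : ℝ) else 0) (G.branch i j) := by
    intro j hj x y hxy
    have hji : j ≠ i := ((G.mem_neighborFinset _ _).1 hj).ne'
    simp only [zombie_dependsOn G upd hloc i τ ztraj hz1 hz2 (G.notMem_branch i j)
      (fun _ hu _ => G.mem_branch_of_adj hu) _ j (G.self_mem_branch hji) hxy]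
  have hdisj : ((G.neighborFinset i : Finset V) : Set V).PairwiseDisjoint (G.branch i) := by
    simpa using htree.isAcyclic.pairwiseDisjoint_branch i
  calc _ = ∑ x : V → X, (∏ j ∈ G.neighborFinset i,
          if ∀ t' ≤ t, ztraj x j t' = ω j t' then (1 : ℝ) else 0) * ∏ v, ν v (x v) := by
        simp only [prod_boole, boole_mul]; congr!
    _ = _ := sum_prod_mul_prod_weight_eq_prod hν1 _ _ hdisj _ hdep
    _ = _ := by simp only [boole_mul]

/-- In the zombie process on a tree, where agent `i`'s trajectory is fixed to
`τ` and the state of the world is fixed to `s`, the trajectories of `i`'s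
neighbors up to time `t` are mutually independent:
`Q(σ_{∂i}^t | τ, s) = ∏_{j ∈ ∂i} Q(σ_j^t | τ, s)`. Probabilities are over
the private signals, which are independent given `s` with laws `ν v`. -/
theorem zombie_neighbor_independence {V X A : Type*} [Fintype V] [DecidableEq V]
    [Fintype X] [DecidableEq X] [DecidableEq A]
    (G : SimpleGraph V) [DecidableRel G.Adj] (htree : G.IsTree)
    (upd : V → X → (V → ℕ → A) → ℕ → A)
    (hloc : ∀ v xv (h h' : V → ℕ → A) (t : ℕ),
      (∀ j, G.Adj v j ∨ j = v → ∀ t' < t, h j t' = h' j t') →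
      upd v xv h t = upd v xv h' t)
    (i : V) (τ : ℕ → A)
    (ztraj : (V → X) → V → ℕ → A)
    (hz1 : ∀ x t, ztraj x i t = τ t)
    (hz2 : ∀ x v t, v ≠ i →
      ztraj x v t = upd v (x v) (fun j t' => ztraj x j t') t)
    (ν : V → X → ℝ) (hν : ∀ v χ, 0 ≤ ν v χ) (hν1 : ∀ v, ∑ χ, ν v χ = 1)
    (ω : V → ℕ → A) (t : ℕ) :
    (∑ x : V → X,
        if ∀ j ∈ G.neighborFinset i, ∀ t' ≤ t, ztraj x j t' = ω j t'
        then ∏ v, ν v (x v) else 0) =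
    ∏ j ∈ G.neighborFinset i,
      (∑ x : V → X,
        if ∀ t' ≤ t, ztraj x j t' = ω j t'
        then ∏ v, ν v (x v) else 0) :=
  zombie_neighbor_independence_general G htree upd hloc i τ ztraj hz1 hz2 ν hν1 ω t
end

section
/- The dynamic cavity recursion holds: for adjacent nodes j and i in a tree with the zombie process fixing state s and i's trajectory τ_i, Q(σ_j^t | τ_i, s) = Σ_{σ_1^{t-1},…,σ_{d-1}^{t-1}} Σ_{x_j} P(x_j | s) · 1[σ_j^t = g_j^t(x_j, (τ_i^{t-1}, σ_1^{t-1},…,σ_{d-1}^{t-1}))] · ∏_{l=1}^{d-1} Q(σ_l^{t-1} | σ_j^{t-1}, s), where 1,…,d−1 are the neighbors of j other than i. -/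
open Finset

open Finset

section Avoid

variable {V : Type*} (G : SimpleGraph V)

/-- There is a walk from `v` to `w` avoiding `z`. -/
def DCAvoid (z v w : V) : Prop := ∃ p : G.Walk v w, z ∉ p.support

variable {G}

lemma dcavoid_ne_left {z v w : V} (h : DCAvoid G z v w) : v ≠ z := by
  obtain ⟨p, hp⟩ := h
  rintro rfl
  exact hp p.start_mem_support

lemma dcavoid_ne_right {z v w : V} (h : DCAvoid G z v w) : w ≠ z := by
  obtain ⟨p, hp⟩ := h
  rintro rfl
  exact hp p.end_mem_support

lemma dcavoid_refl {z v : V} (h : v ≠ z) : DCAvoid G z v v :=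
  ⟨.nil, by simp [Ne.symm h]⟩

lemma dcavoid_step {z v u : V} (h : G.Adj v u) (hv : v ≠ z) (hu : u ≠ z) :
    DCAvoid G z v u :=
  ⟨.cons h .nil, by simp [Ne.symm hv, Ne.symm hu]⟩

lemma dcavoid_symm {z v w : V} (h : DCAvoid G z v w) : DCAvoid G z w v := by
  obtain ⟨p, hp⟩ := h
  exact ⟨p.reverse, by simpa using hp⟩

lemma dcavoid_trans {z a b c : V} (h1 : DCAvoid G z a b) (h2 : DCAvoid G z b c) :
    DCAvoid G z a c := by
  obtain ⟨p, hp⟩ := h1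
  obtain ⟨q, hq⟩ := h2
  refine ⟨p.append q, fun hz => ?_⟩
  rcases (SimpleGraph.Walk.mem_support_append_iff _ _).1 hz with h | h
  exacts [hp h, hq h]

/-- In an acyclic graph, two distinct neighbors of `j` are not connected avoiding `j`. -/
lemma dcavoid_tree [DecidableEq V] {j a b : V} (hac : G.IsAcyclic) (ha : G.Adj j a) (hb : G.Adj j b)
    (hab : a ≠ b) : ¬ DCAvoid G j a b := by
  rintro ⟨p, hp⟩
  have hq : j ∉ p.bypass.support := fun h => hp (p.support_bypass_subset h)
  have hpath1 : (SimpleGraph.Walk.cons ha p.bypass).IsPath :=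
    p.bypass_isPath.cons hq
  have hpath2 : (SimpleGraph.Walk.cons hb .nil).IsPath := by
    simp only [SimpleGraph.Walk.cons_isPath_iff]
    exact ⟨SimpleGraph.Walk.IsPath.nil, by simpa using hb.ne⟩
  have := hac.path_unique ⟨_, hpath1⟩ ⟨_, hpath2⟩
  have hsup := congrArg (fun q : G.Path j b => q.1.support) this
  simp only [SimpleGraph.Walk.support_cons, SimpleGraph.Walk.support_nil] at hsup
  rw [p.bypass.support_eq_cons] at hsup
  simp only [List.cons.injEq] at hsup
  exact hab hsup.2.1

end Avoid

section Proc

variable {V X A : Type*} {G : SimpleGraph V}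
    {upd : V → X → (V → ℕ → A) → ℕ → A}
    (hloc : ∀ v xv (h h' : V → ℕ → A) (t : ℕ),
      (∀ j, G.Adj v j ∨ j = v → ∀ t' < t, h j t' = h' j t') →
      upd v xv h t = upd v xv h' t)
    {ztraj : V → (ℕ → A) → (V → X) → V → ℕ → A}
    (hz1 : ∀ z τ x t, ztraj z τ x z t = τ t)
    (hz2 : ∀ z τ x v t, v ≠ z →
      ztraj z τ x v t = upd v (x v) (fun w t' => ztraj z τ x w t') t)

include hloc hz1 hz2

/-- The zombie trajectory at `v` only depends on the signals in the
component of `v` avoiding the zombie `z`. -/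
lemma ztraj_local (z : V) (τ0 : ℕ → A) (x x' : V → X) (t : ℕ) (v : V)
    (h : ∀ w, DCAvoid G z v w → x w = x' w) :
    ztraj z τ0 x v t = ztraj z τ0 x' v t := by
  induction t using Nat.strong_induction_on generalizing v with
  | _ t IH =>
    by_cases hvz : v = z
    · subst hvz; rw [hz1, hz1]
    · rw [hz2 _ _ _ _ _ hvz, hz2 _ _ _ _ _ hvz, h v (dcavoid_refl hvz)]
      refine hloc _ _ _ _ _ ?_
      rintro u (hu | rfl) t' ht'
      · by_cases huz : u = z
        · subst huz; rw [hz1, hz1]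
        · exact IH t' ht' u fun w hw =>
            h w (dcavoid_trans (dcavoid_step hu hvz huz) hw)
      · exact IH t' ht' u h

/-- Switching the zombie from `i` to `j`: if `j`'s trajectory with zombie `i`
agrees with `σj` up to time `T`, then for nodes separated from `i` by `j`,
the trajectories with zombie `i` (trajectory `τ`) and zombie `j`
(trajectory `σj`) agree up to time `T`. -/
lemma ztraj_switch (i j : V) (τ σj : ℕ → A) (x : V → X) (T : ℕ)
    (hagree : ∀ s < T, ztraj i τ x j s = σj s) (s : ℕ) (hs : s ≤ T) (v : V)
    (hvj : v ≠ j) (hvi : ¬ DCAvoid G j v i) :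
    ztraj i τ x v s = ztraj j σj x v s := by
  induction s using Nat.strong_induction_on generalizing v with
  | _ s IH =>
    have hvi' : v ≠ i := fun h => hvi (h ▸ dcavoid_refl hvj)
    rw [hz2 _ _ _ _ _ hvi', hz2 _ _ _ _ _ hvj]
    refine hloc _ _ _ _ _ ?_
    rintro u (hu | rfl) t' ht'
    · by_cases huj : u = j
      · subst huj
        rw [hz1, hagree _ (lt_of_lt_of_le ht' hs)]
      · refine IH t' ht' (le_trans (le_of_lt ht') hs) u huj fun hau => ?_
        exact hvi (dcavoid_trans (dcavoid_step hu hvj huj) hau)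
    · exact IH t' ht' (le_trans (le_of_lt ht') hs) u hvj hvi

end Proc

section Fact

variable {V X : Type*} [Fintype V] [Fintype X] [Nonempty X] [DecidableEq V] [DecidableEq X]

/-- Extend a partial signal configuration by junk. -/
noncomputable def dcext (p : V → Prop) [DecidablePred p] (y : {v // p v} → X) : V → X :=
  fun v => if h : p v then y ⟨v, h⟩ else Classical.arbitrary X

lemma normSum {W : Type*} [Fintype W] [DecidableEq W] (μ : W → X → ℝ)
    (h : ∀ w, ∑ χ, μ w χ = 1) : ∑ g : W → X, ∏ w, μ w (g w) = 1 := by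
  rw [← Fintype.prod_sum]
  simp [h]

lemma blockSum2 (ν : V → X → ℝ) (hν1 : ∀ v, ∑ χ, ν v χ = 1)
    (p : V → Prop) [DecidablePred p] (F G : (V → X) → ℝ)
    (hF : ∀ x x', (∀ v, p v → x v = x' v) → F x = F x')
    (hG : ∀ x x', (∀ v, ¬ p v → x v = x' v) → G x = G x') :
    ∑ x : V → X, F x * G x * ∏ v, ν v (x v) =
      (∑ y : {v // p v} → X, F (dcext p y) * ∏ q : {v // p v}, ν q.1 (y q)) *
      (∑ w : {v // ¬ p v} → X, G (dcext (fun v => ¬ p v) w) *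
        ∏ q : {v // ¬ p v}, ν q.1 (w q)) := by
  rw [← Equiv.sum_comp (Equiv.piEquivPiSubtypeProd p (fun _ => X)).symm]
  rw [Fintype.sum_prod_type, Finset.sum_mul_sum]
  refine Finset.sum_congr rfl fun y _ => Finset.sum_congr rfl fun w _ => ?_
  have h1 : F ((Equiv.piEquivPiSubtypeProd p fun _ => X).symm (y, w)) = F (dcext p y) :=
    hF _ _ (fun v hv => by
      simp [Equiv.piEquivPiSubtypeProd_symm_apply, dcext, hv])
  have h2 : G ((Equiv.piEquivPiSubtypeProd p fun _ => X).symm (y, w)) =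
      G (dcext (fun v => ¬ p v) w) :=
    hG _ _ (fun v hv => by
      simp [Equiv.piEquivPiSubtypeProd_symm_apply, dcext, hv])
  have h3 : (∏ v, ν v ((Equiv.piEquivPiSubtypeProd p fun _ => X).symm (y, w) v)) =
      (∏ q : {v // p v}, ν q.1 (y q)) * ∏ q : {v // ¬ p v}, ν q.1 (w q) := by
    rw [← Fintype.prod_subtype_mul_prod_subtype p
      (fun v => ν v ((Equiv.piEquivPiSubtypeProd p fun _ => X).symm (y, w) v))]
    congr 1 <;> refine Finset.prod_congr rfl fun q _ => ?_ <;>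
      simp [Equiv.piEquivPiSubtypeProd_symm_apply, q.2]
  rw [h1, h2, h3]; ring

lemma blockSum1 (ν : V → X → ℝ) (hν1 : ∀ v, ∑ χ, ν v χ = 1)
    (p : V → Prop) [DecidablePred p] (F : (V → X) → ℝ)
    (hF : ∀ x x', (∀ v, p v → x v = x' v) → F x = F x') :
    ∑ x : V → X, F x * ∏ v, ν v (x v) =
      ∑ y : {v // p v} → X, F (dcext p y) * ∏ q : {v // p v}, ν q.1 (y q) := by
  have h2 := blockSum2 ν hν1 p F (fun _ => 1) hF (fun _ _ _ => rfl)
  have hn : ∑ w : {v // ¬ p v} → X,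
      ∏ q : {v // ¬ p v}, ν q.1 (w q) = 1 :=
    normSum (fun q : {v // ¬ p v} => ν q.1) (fun q => hν1 q.1)
  simpa [hn] using h2

lemma twoBlock (ν : V → X → ℝ) (hν1 : ∀ v, ∑ χ, ν v χ = 1)
    (p : V → Prop) [DecidablePred p] (F G : (V → X) → ℝ)
    (hF : ∀ x x', (∀ v, p v → x v = x' v) → F x = F x')
    (hG : ∀ x x', (∀ v, ¬ p v → x v = x' v) → G x = G x') :
    ∑ x : V → X, F x * G x * ∏ v, ν v (x v) =
      (∑ x : V → X, F x * ∏ v, ν v (x v)) *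
      (∑ x : V → X, G x * ∏ v, ν v (x v)) := by
  rw [blockSum2 ν hν1 p F G hF hG, blockSum1 ν hν1 p F hF,
    blockSum1 ν hν1 (fun v => ¬ p v) G hG]

lemma factorize {K : Type*} [DecidableEq K] (ν : V → X → ℝ)
    (hν1 : ∀ v, ∑ χ, ν v χ = 1) (c : V → K) (f : K → (V → X) → ℝ)
    (hf : ∀ k x x', (∀ v, c v = k → x v = x' v) → f k x = f k x') (s : Finset K) :
    ∑ x : V → X, (∏ k ∈ s, f k x) * ∏ v, ν v (x v)
      = ∏ k ∈ s, ∑ x : V → X, f k x * ∏ v, ν v (x v) := by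
  induction s using Finset.induction with
  | empty => simpa using normSum ν hν1
  | @insert a s ha IH =>
    simp only [Finset.prod_insert ha]
    rw [← IH]
    have := twoBlock ν hν1 (fun v => c v = a) (f a) (fun x => ∏ k ∈ s, f k x)
      (hf a)
      (fun x x' hxx' => Finset.prod_congr rfl fun k hk => hf k x x'
        (fun v hv => hxx' v (by rintro rfl; rw [hv] at ha; exact ha hk)))
    simpa [mul_assoc] using this
  
lemma projSum (ν : V → X → ℝ) (hν1 : ∀ v, ∑ χ, ν v χ = 1) (j : V) (g : X → ℝ) :
    ∑ x : V → X, g (x j) * ∏ v, ν v (x v) = ∑ ξ, ν j ξ * g ξ := by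
  have hj : ¬ j ≠ j := fun h => h rfl
  rw [blockSum1 ν hν1 (fun v => ¬ v ≠ j) (fun x => g (x j))
    (fun x x' h => congrArg g (h j hj))]
  refine Finset.sum_bij' (fun y _ => y ⟨j, hj⟩)
    (fun ξ _ => fun _ => ξ) ?_ ?_
    (fun y _ => by
      funext q; obtain ⟨v, hv⟩ := q
      have hvj : v = j := not_not.mp hv
      subst hvj; rfl)
    (fun ξ _ => rfl) (fun y _ => ?_)
  · intro y _; exact Finset.mem_univ _
  · intro ξ _; exact Finset.mem_univ _
  · rw [mul_comm]
    congr 1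
    · refine Finset.prod_eq_single (a := (⟨j, hj⟩ : {v // ¬ v ≠ j}))
        (fun b _ hb => (hb (by
          obtain ⟨v, hv⟩ := b
          have hvj : v = j := not_not.mp hv
          subst hvj; rfl)).elim)
        (fun h => (h (Finset.mem_univ _)).elim)
    · exact congrArg g (dif_pos hj)

end Fact

set_option maxHeartbeats 1000000 in
/-- The dynamic cavity recursion. For adjacent nodes `i`, `j` of a tree, in
the zombie process fixing the state `s` and `i`'s trajectory `τ`, the cavity
probability `Q(σ_j^t | τ, s)` — the probability over private signals (with
conditional laws `ν v` given `s`) that `j` exhibits trajectory `σj` up to time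
`t` — equals the sum over the trajectories `σc` of `j`'s other neighbors
`l ∈ ∂j \ {i}` up to time `t-1` and over `j`'s signal `ξ` of
`P(ξ|s)·1[σ_j^t = g_j^t(ξ, (τ^{t-1}, σc))]·∏_l Q(σ_l^{t-1} | σ_j^{t-1}, s)`,
where in each factor `Q(σ_l^{t-1} | σ_j^{t-1}, s)` node `j` is the zombie,
with trajectory `σj`. -/
theorem dynamic_cavity_recursion {V X A : Type*} [Fintype V] [DecidableEq V]
    [Fintype X] [DecidableEq X] [Fintype A] [DecidableEq A] [Inhabited A]
    (G : SimpleGraph V) [DecidableRel G.Adj] (htree : G.IsTree)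
    (upd : V → X → (V → ℕ → A) → ℕ → A)
    (hloc : ∀ v xv (h h' : V → ℕ → A) (t : ℕ),
      (∀ j, G.Adj v j ∨ j = v → ∀ t' < t, h j t' = h' j t') →
      upd v xv h t = upd v xv h' t)
    (ztraj : V → (ℕ → A) → (V → X) → V → ℕ → A)
    (hz1 : ∀ z τ x t, ztraj z τ x z t = τ t)
    (hz2 : ∀ z τ x v t, v ≠ z →
      ztraj z τ x v t = upd v (x v) (fun w t' => ztraj z τ x w t') t)
    (ν : V → X → ℝ) (hν : ∀ v χ, 0 ≤ ν v χ) (hν1 : ∀ v, ∑ χ, ν v χ = 1)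
    (i j : V) (hadj : G.Adj i j) (τ σj : ℕ → A) (t : ℕ) :
    (∑ x : V → X,
        if ∀ t' ≤ t, ztraj i τ x j t' = σj t'
        then ∏ v, ν v (x v) else 0) =
    ∑ σc : {v // v ∈ (G.neighborFinset j).erase i} → Fin t → A,
      ∑ ξ : X,
        ν j ξ *
        (if ∀ t' ≤ t, σj t' =
            upd j ξ
              (fun v t'' =>
                if v = j then σj t''
                else if v = i then τ t''
                else if h : v ∈ (G.neighborFinset j).erase i then
                  (if h2 : t'' < t then σc ⟨v, h⟩ ⟨t'', h2⟩ else default)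
                else default) t'
          then (1 : ℝ) else 0) *
        ∏ l : {v // v ∈ (G.neighborFinset j).erase i},
          (∑ x : V → X,
            if ∀ t' : Fin t, ztraj j σj x l t' = σc l t'
            then ∏ v, ν v (x v) else 0) := by
  classical
  cases isEmpty_or_nonempty X with
  | inl hX =>
    haveI := hX
    haveI : IsEmpty (V → X) := ⟨fun f => hX.false (f i)⟩
    simp [Finset.univ_eq_empty]
  | inr hX =>
  haveI := hX
  set N := (G.neighborFinset j).erase i with hN
  have hji : j ≠ i := hadj.ne'
  have hNadj : ∀ l : {v // v ∈ N}, G.Adj j l.1 := fun l =>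
    (SimpleGraph.mem_neighborFinset G j l.1).mp (Finset.mem_of_mem_erase l.2)
  have hNi : ∀ l : {v // v ∈ N}, l.1 ≠ i := fun l => (Finset.mem_erase.mp l.2).1
  have hNj : ∀ l : {v // v ∈ N}, l.1 ≠ j := fun l => (hNadj l).ne'
  have hNavoid : ∀ l : {v // v ∈ N}, ¬ DCAvoid G j l.1 i := fun l =>
    dcavoid_tree htree.2 (hNadj l) hadj.symm (hNi l)
  have hdisj : ∀ (l l' : {v // v ∈ N}) (w : V),
      DCAvoid G j l.1 w → DCAvoid G j l'.1 w → l = l' := by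
    intro l l' w h1 h2
    by_contra hne
    exact dcavoid_tree htree.2 (hNadj l) (hNadj l')
      (fun h => hne (Subtype.ext h)) (dcavoid_trans h1 (dcavoid_symm h2))
  set c : V → Option {v // v ∈ N} := fun v =>
    if h : ∃ l : {v' // v' ∈ N}, DCAvoid G j l.1 v then some h.choose
    else none with hc
  have c_spec : ∀ (l : {v // v ∈ N}) (w : V),
      c w = some l ↔ DCAvoid G j l.1 w := by
    intro l w
    constructor
    · intro h
      rw [hc] at h
      by_cases hex : ∃ l' : {v' // v' ∈ N}, DCAvoid G j l'.1 w
      · simp only [dif_pos hex, Option.some.injEq] at h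
        exact h ▸ hex.choose_spec
      · simp only [dif_neg hex] at h
        exact absurd h (by simp)
    · intro hw
      have hex : ∃ l' : {v' // v' ∈ N}, DCAvoid G j l'.1 w := ⟨l, hw⟩
      rw [hc]
      simp only [dif_pos hex, Option.some.injEq]
      exact hdisj _ _ _ hex.choose_spec hw
  have c_j : c j = none := by
    rw [hc]
    exact dif_neg (fun hex => dcavoid_ne_right hex.choose_spec rfl)
  -- step A : introduce the cavity trajectories
  have stepA : (∑ x : V → X,
        if ∀ t' ≤ t, ztraj i τ x j t' = σj t'
        then ∏ v, ν v (x v) else 0) =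
      ∑ x : V → X, ∑ σc : {v // v ∈ N} → Fin t → A,
        if ((∀ t' ≤ t, ztraj i τ x j t' = σj t') ∧
            σc = fun (l : {v // v ∈ N}) (t'' : Fin t) => ztraj i τ x l.1 t'')
        then ∏ v, ν v (x v) else 0 := by
    refine Finset.sum_congr rfl fun x _ => ?_
    by_cases hI : ∀ t' ≤ t, ztraj i τ x j t' = σj t'
    · rw [if_pos hI,
        Finset.sum_congr rfl fun σc' _ => if_congr (and_iff_right hI) rfl rfl,
        Finset.sum_ite_eq' Finset.univ
          (fun (l : {v // v ∈ N}) (t'' : Fin t) => ztraj i τ x l.1 t'')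
          (fun _ => ∏ v, ν v (x v))]
      simp
    · simp [hI]
  rw [stepA, Finset.sum_comm]
  refine Finset.sum_congr rfl fun σc _ => ?_
  -- per sigma
  have hswitch : ∀ (x : V → X) (T : ℕ), (∀ s < T, ztraj i τ x j s = σj s) →
      ∀ s, s ≤ T → ∀ l : {v // v ∈ N},
        ztraj i τ x l.1 s = ztraj j σj x l.1 s :=
    fun x T hag s hs l =>
      ztraj_switch hloc hz1 hz2 i j τ σj x T hag s hs l.1 (hNj l) (hNavoid l)
  have key : ∀ x : V → X,
      ((∀ t' ≤ t, ztraj i τ x j t' = σj t') ∧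
          σc = fun (l : {v // v ∈ N}) (t'' : Fin t) => ztraj i τ x l.1 t'') ↔
      ((∀ t' ≤ t, σj t' =
          upd j (x j)
            (fun v t'' =>
              if v = j then σj t''
              else if v = i then τ t''
              else if h : v ∈ N then
                (if h2 : t'' < t then σc ⟨v, h⟩ ⟨t'', h2⟩ else default)
              else default) t') ∧
        ∀ (l : {v // v ∈ N}) (t'' : Fin t),
          ztraj j σj x l.1 t'' = σc l t'') := by
    intro x
    constructor
    · rintro ⟨hI, rfl⟩
      have hJ' : ∀ (l : {v // v ∈ N}) (t'' : Fin t),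
          ztraj j σj x l.1 t'' = ztraj i τ x l.1 t'' :=
        fun l t'' =>
          (hswitch x t (fun s hs => hI s hs.le) t'' (le_of_lt t''.2) l).symm
      refine ⟨?_, fun l t'' => hJ' l t''⟩
      intro t' ht'
      calc σj t' = ztraj i τ x j t' := (hI t' ht').symm
        _ = upd j (x j) (fun w s => ztraj i τ x w s) t' := hz2 _ _ _ _ _ hji
        _ = _ := by
          refine hloc _ _ _ _ _ ?_
          rintro u (hu | rfl) t'' ht''
          · have huj : u ≠ j := hu.ne'
            by_cases hui : u = i
            · subst hui
              simp [hz1, huj]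
            · have hmem : u ∈ N := Finset.mem_erase.mpr
                ⟨hui, (SimpleGraph.mem_neighborFinset G j u).mpr hu⟩
              simp only [if_neg huj, if_neg hui, dif_pos hmem,
                dif_pos (lt_of_lt_of_le ht'' ht')]
          · simp [hI t'' (le_trans (le_of_lt ht'') ht')]
    · rintro ⟨hK, hJ'⟩
      have hI : ∀ t', t' ≤ t → ztraj i τ x j t' = σj t' := by
        intro t'
        induction t' using Nat.strong_induction_on with
        | _ t' IH =>
          intro ht'
          calc ztraj i τ x j t'
              = upd j (x j) (fun w s => ztraj i τ x w s) t' := hz2 _ _ _ _ _ hji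
            _ = upd j (x j)
                (fun v t'' =>
                  if v = j then σj t''
                  else if v = i then τ t''
                  else if h : v ∈ N then
                    (if h2 : t'' < t then σc ⟨v, h⟩ ⟨t'', h2⟩ else default)
                  else default) t' := by
                refine hloc _ _ _ _ _ ?_
                rintro u (hu | rfl) t'' ht''
                · have huj : u ≠ j := hu.ne'
                  by_cases hui : u = i
                  · subst hui
                    simp [hz1, huj]
                  · have hmem : u ∈ N := Finset.mem_erase.mpr
                      ⟨hui, (SimpleGraph.mem_neighborFinset G j u).mpr hu⟩
                    have ht2 : t'' < t := lt_of_lt_of_le ht'' ht'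
                    have hsw : ztraj i τ x u t'' = ztraj j σj x u t'' :=
                      hswitch x t'
                        (fun s hs => IH s hs (le_trans (le_of_lt hs) ht'))
                        t'' (le_of_lt ht'') ⟨u, hmem⟩
                    rw [hsw]
                    simp only [if_neg huj, if_neg hui, dif_pos hmem,
                      dif_pos ht2]
                    exact hJ' ⟨u, hmem⟩ ⟨t'', ht2⟩
                · simp [IH t'' ht'' (le_trans (le_of_lt ht'') ht')]
            _ = σj t' := (hK t' ht').symm
      refine ⟨fun t' ht' => hI t' ht', ?_⟩
      funext l t''
      rw [hswitch x t (fun s hs => hI s hs.le) t'' (le_of_lt t''.2) l]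
      exact (hJ' l t'').symm
  -- abbreviations for the two kinds of class indicators
  calc (∑ x : V → X,
        if ((∀ t' ≤ t, ztraj i τ x j t' = σj t') ∧
            σc = fun (l : {v // v ∈ N}) (t'' : Fin t) => ztraj i τ x l.1 t'')
        then ∏ v, ν v (x v) else 0)
      = ∑ x : V → X,
        if ((∀ t' ≤ t, σj t' =
            upd j (x j)
              (fun v t'' =>
                if v = j then σj t''
                else if v = i then τ t''
                else if h : v ∈ N then
                  (if h2 : t'' < t then σc ⟨v, h⟩ ⟨t'', h2⟩ else default)
                else default) t') ∧
          ∀ (l : {v // v ∈ N}) (t'' : Fin t),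
            ztraj j σj x l.1 t'' = σc l t'')
        then ∏ v, ν v (x v) else 0 :=
      Finset.sum_congr rfl fun x _ => if_congr (key x) rfl rfl
    _ = ∑ x : V → X,
        (∏ k : Option {v // v ∈ N},
          Option.elim k
            (if ∀ t' ≤ t, σj t' =
                upd j (x j)
                  (fun v t'' =>
                    if v = j then σj t''
                    else if v = i then τ t''
                    else if h : v ∈ N then
                      (if h2 : t'' < t then σc ⟨v, h⟩ ⟨t'', h2⟩ else default)
                    else default) t'
              then (1 : ℝ) else 0)
            (fun l =>
              if ∀ t'' : Fin t, ztraj j σj x l.1 t'' = σc l t''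
              then (1 : ℝ) else 0)) * ∏ v, ν v (x v) := by
      refine Finset.sum_congr rfl fun x _ => ?_
      rw [Fintype.prod_option]
      simp only [Option.elim_none, Option.elim_some]
      by_cases hK : ∀ t' ≤ t, σj t' =
          upd j (x j)
            (fun v t'' =>
              if v = j then σj t''
              else if v = i then τ t''
              else if h : v ∈ N then
                (if h2 : t'' < t then σc ⟨v, h⟩ ⟨t'', h2⟩ else default)
              else default) t'
      · by_cases hJ : ∀ (l : {v // v ∈ N}) (t'' : Fin t),
            ztraj j σj x l.1 t'' = σc l t''
        · rw [if_pos ⟨hK, hJ⟩, if_pos hK]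
          rw [Finset.prod_congr rfl fun (l : {v // v ∈ N}) _ =>
            if_pos (hJ l)]
          simp
        · rw [not_forall] at hJ
          obtain ⟨l, hl⟩ := hJ
          rw [if_neg (fun hc' => hl (fun t'' => hc'.2 l t''))]
          have hz : (∏ l' : {v // v ∈ N},
              if ∀ t'' : Fin t, ztraj j σj x l'.1 t'' = σc l' t''
              then (1 : ℝ) else 0) = 0 :=
            Finset.prod_eq_zero (Finset.mem_univ l) (if_neg hl)
          rw [hz]
          ring
      · rw [if_neg (fun hc' => hK hc'.1), if_neg hK]
        ring
    _ = ∏ k : Option {v // v ∈ N},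
        ∑ x : V → X,
          Option.elim k
            (if ∀ t' ≤ t, σj t' =
                upd j (x j)
                  (fun v t'' =>
                    if v = j then σj t''
                    else if v = i then τ t''
                    else if h : v ∈ N then
                      (if h2 : t'' < t then σc ⟨v, h⟩ ⟨t'', h2⟩ else default)
                    else default) t'
              then (1 : ℝ) else 0)
            (fun l =>
              if ∀ t'' : Fin t, ztraj j σj x l.1 t'' = σc l t''
              then (1 : ℝ) else 0) * ∏ v, ν v (x v) := by
      refine factorize ν hν1 c
        (fun k x =>
          Option.elim k
            (if ∀ t' ≤ t, σj t' =
                upd j (x j)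
                  (fun v t'' =>
                    if v = j then σj t''
                    else if v = i then τ t''
                    else if h : v ∈ N then
                      (if h2 : t'' < t then σc ⟨v, h⟩ ⟨t'', h2⟩ else default)
                    else default) t'
              then (1 : ℝ) else 0)
            (fun l =>
              if ∀ t'' : Fin t, ztraj j σj x l.1 t'' = σc l t''
              then (1 : ℝ) else 0))
        ?_ Finset.univ
      rintro (_ | l) x x' hagree
      · have hxj : x j = x' j := hagree j c_j
        simp only [Option.elim_none, hxj]
      · have hzz : ∀ t'' : Fin t, ztraj j σj x l.1 t'' = ztraj j σj x' l.1 t'' :=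
          fun t'' => ztraj_local hloc hz1 hz2 j σj x x' t'' l.1
            (fun w hw => hagree w ((c_spec l w).mpr hw))
        simp only [Option.elim_some]
        refine if_congr (forall_congr' fun t'' => ?_) rfl rfl
        rw [hzz t'']
    _ = (∑ x : V → X,
          (if ∀ t' ≤ t, σj t' =
              upd j (x j)
                (fun v t'' =>
                  if v = j then σj t''
                  else if v = i then τ t''
                  else if h : v ∈ N then
                    (if h2 : t'' < t then σc ⟨v, h⟩ ⟨t'', h2⟩ else default)
                  else default) t'
            then (1 : ℝ) else 0) * ∏ v, ν v (x v)) *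
        ∏ l : {v // v ∈ N},
          ∑ x : V → X,
            (if ∀ t'' : Fin t, ztraj j σj x l.1 t'' = σc l t''
              then (1 : ℝ) else 0) * ∏ v, ν v (x v) :=
      Fintype.prod_option _
    _ = (∑ ξ : X, ν j ξ *
          (if ∀ t' ≤ t, σj t' =
              upd j ξ
                (fun v t'' =>
                  if v = j then σj t''
                  else if v = i then τ t''
                  else if h : v ∈ N then
                    (if h2 : t'' < t then σc ⟨v, h⟩ ⟨t'', h2⟩ else default)
                  else default) t'
            then (1 : ℝ) else 0)) *
        ∏ l : {v // v ∈ N},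
          ∑ x : V → X,
            (if ∀ t'' : Fin t, ztraj j σj x l.1 t'' = σc l t''
              then ∏ v, ν v (x v) else 0) := by
      congr 1
      · exact projSum ν hν1 j (fun ξ =>
          if ∀ t' ≤ t, σj t' =
              upd j ξ
                (fun v t'' =>
                  if v = j then σj t''
                  else if v = i then τ t''
                  else if h : v ∈ N then
                    (if h2 : t'' < t then σc ⟨v, h⟩ ⟨t'', h2⟩ else default)
                  else default) t'
            then (1 : ℝ) else 0)
      · refine Finset.prod_congr rfl fun l _ => Finset.sum_congr rfl fun x _ => ?_
        by_cases h : ∀ t'' : Fin t, ztraj j σj x l.1 t'' = σc l t'' <;> simp [h]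
    _ = ∑ ξ : X, ν j ξ *
          (if ∀ t' ≤ t, σj t' =
              upd j ξ
                (fun v t'' =>
                  if v = j then σj t''
                  else if v = i then τ t''
                  else if h : v ∈ N then
                    (if h2 : t'' < t then σc ⟨v, h⟩ ⟨t'', h2⟩ else default)
                  else default) t'
            then (1 : ℝ) else 0) *
        ∏ l : {v // v ∈ N},
          ∑ x : V → X,
            (if ∀ t'' : Fin t, ztraj j σj x l.1 t'' = σc l t''
              then ∏ v, ν v (x v) else 0) := Finset.sum_mul _ _ _
end

section
/- Under the assumptions of the dynamic cavity method on a tree, the Bayesian posterior factorizes: P(s | x_i, σ_{∂i}^{t-1}) ∝ P(s)·P(x_i | s)·∏_{j ∈ ∂i} Q(σ_j^{t-1} | σ_i^{t-1}, s), where σ_i^{t-1} = g_i^{t-1}(x_i, σ_{∂i}^{t-2}) is i's own (deterministic) trajectory and Q denotes the zombie-process probabilities. -/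
/-!
Once agent `i` has seen `ξ` and its neighbours have played `ω`, its own trajectory is forced
to be `τ`, so on this event the true dynamics agrees with the zombie dynamics in which `i` plays
`τ` regardless of the signals. In the zombie dynamics the trajectory of a neighbour `j` of `i`
is a function of the signals in the branch of `j` in the tree with `i` removed. These branches are
pairwise disjoint and do not contain `i`, and the signals are independent given `s`, so the
probability of the consistency event factors into `ν(ξ | s)` times the zombie probabilities of the
neighbours' trajectories.
-/

open Finset

theorem dependsOn_finset_prod {ι κ M : Type*} {α : κ → Type*} [CommMonoid M] {J : Finset ι}
    {f : ι → (Π k, α k) → M} {s : Set κ} (hf : ∀ j ∈ J, DependsOn (f j) s) :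
    DependsOn (fun x => ∏ j ∈ J, f j x) s := fun _ _ hxy =>
  prod_congr rfl fun j hj => hf j hj hxy

section WeightedSum

variable {V X R : Type*} [Fintype V] [DecidableEq V] [Fintype X] [CommSemiring R]
  {w : V → X → R}

theorem sum_prod_eq_one (hw : ∀ v, ∑ χ, w v χ = 1) : ∑ x : V → X, ∏ v, w v (x v) = 1 := by
  rw [← Fintype.prod_sum]
  exact prod_eq_one fun v _ => hw v

theorem sum_mul_prod_eq_sum_apply (hw : ∀ v, ∑ χ, w v χ = 1) (i : V) (h : X → R) :
    ∑ x : V → X, h (x i) * ∏ v, w v (x v) = ∑ χ, h χ * w i χ := by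
  set w' := Function.update w i fun χ => h χ * w i χ
  have hsummand : ∀ x : V → X, h (x i) * ∏ v, w v (x v) = ∏ v, w' v (x v) := by
    intro x
    rw [← mul_prod_erase univ _ (mem_univ i), ← mul_prod_erase univ _ (mem_univ i), ← mul_assoc]
    congr 1
    · simp [w']
    · exact prod_congr rfl fun v hv => by simp [w', ne_of_mem_erase hv]
  simp_rw [hsummand, ← Fintype.prod_sum]
  rw [Fintype.prod_eq_single i fun v hv => by simp [w', hv, hw]]
  simp [w']

/-- Swap the coordinates outside `s` between two independent copies `x, y`. -/
theorem sum_mul_mul_prod_of_dependsOn (hw : ∀ v, ∑ χ, w v χ = 1) {f g : (V → X) → R}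
    {s : Set V} (hf : DependsOn f s) (hg : DependsOn g sᶜ) :
    ∑ x, f x * g x * ∏ v, w v (x v) =
      (∑ x, f x * ∏ v, w v (x v)) * ∑ x, g x * ∏ v, w v (x v) := by
  classical
  let W : (V → X) → R := fun x => ∏ v, w v (x v)
  let σ : (V → X) × (V → X) → (V → X) × (V → X) :=
    fun p => (s.piecewise p.1 p.2, s.piecewise p.2 p.1)
  have hσ : Function.Involutive σ := fun p => by
    ext v <;> by_cases hv : v ∈ s <;> simp [σ, hv]
  have hWσ : ∀ p, W (σ p).1 * W (σ p).2 = W p.1 * W p.2 := fun p => by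
    simp only [W, ← prod_mul_distrib]
    refine prod_congr rfl fun v _ => ?_
    by_cases hv : v ∈ s <;> simp [σ, hv, mul_comm]
  have hW : ∑ x, W x = 1 := sum_prod_eq_one hw
  calc ∑ x, f x * g x * W x
      = ∑ p : (V → X) × (V → X), f p.1 * g p.1 * (W p.1 * W p.2) := by
        simp_rw [Fintype.sum_prod_type, ← mul_assoc, ← mul_sum, hW, mul_one]
    _ = ∑ p : (V → X) × (V → X), f (σ p).1 * g (σ p).1 * (W (σ p).1 * W (σ p).2) :=
        (Equiv.sum_comp (hσ.toPerm σ) _).symm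
    _ = ∑ p : (V → X) × (V → X), f p.1 * W p.1 * (g p.2 * W p.2) := by
        refine sum_congr rfl fun p _ => ?_
        have hfσ : f (σ p).1 = f p.1 := hf fun v hv => by simp [σ, hv]
        have hgσ : g (σ p).1 = g p.2 := hg fun v hv => by simp [σ, Set.notMem_of_mem_compl hv]
        rw [hWσ, hfσ, hgσ]
        ring
    _ = (∑ x, f x * W x) * ∑ x, g x * W x := by
        rw [Fintype.sum_prod_type, sum_mul_sum]

theorem sum_prod_mul_prod_of_pairwiseDisjoint {ι : Type*} [DecidableEq ι]
    (hw : ∀ v, ∑ χ, w v χ = 1) {J : Finset ι} {f : ι → (V → X) → R} {S : ι → Set V}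
    (hS : (J : Set ι).PairwiseDisjoint S) (hf : ∀ j ∈ J, DependsOn (f j) (S j)) :
    ∑ x, (∏ j ∈ J, f j x) * ∏ v, w v (x v) = ∏ j ∈ J, ∑ x, f j x * ∏ v, w v (x v) := by
  induction J using Finset.induction with
  | empty => simp [sum_prod_eq_one hw]
  | insert j J hj ih =>
    have hrest : DependsOn (fun x => ∏ j' ∈ J, f j' x) (S j)ᶜ :=
      dependsOn_finset_prod fun j' hj' =>
        (hf j' (mem_insert_of_mem hj')).mono <|
          (hS (by simp) (by simp [hj']) (by rintro rfl; exact hj hj')).subset_compl_left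
    simp_rw [prod_insert hj]
    rw [sum_mul_mul_prod_of_dependsOn hw (hf j (mem_insert_self j J)) hrest,
      ih (hS.subset (by simp)) fun j' hj' => hf j' (mem_insert_of_mem hj')]

end WeightedSum

namespace SimpleGraph

variable {V : Type*} {G : SimpleGraph V}

theorem eq_of_reachable_deleteIncidenceSet {i j : V} (h : (G.deleteIncidenceSet i).Reachable j i) :
    j = i := by
  obtain ⟨w⟩ := h
  cases w.reverse with
  | nil => rfl
  | cons hadj _ => exact absurd rfl (deleteIncidenceSet_adj.mp hadj).2.1

/-- A path from `j` to `j'` avoiding `i` would show that the edge `ij` is not a bridge. -/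
theorem IsAcyclic.pairwiseDisjoint_reachable_deleteIncidenceSet (hG : G.IsAcyclic) (i : V) :
    (G.neighborSet i).PairwiseDisjoint fun j => {u | (G.deleteIncidenceSet i).Reachable j u} := by
  intro j hj j' hj' hne
  refine Set.disjoint_left.mpr fun u hju hj'u => ?_
  have hle : G.deleteIncidenceSet i ≤ G.deleteEdges {s(i, j)} :=
    deleteEdges_anti <| Set.singleton_subset_iff.mpr ⟨hj, by simp⟩
  have hij' : (G.deleteEdges {s(i, j)}).Adj i j' := by
    simp [(mem_neighborSet G i j').mp hj', Ne.symm hne, G.ne_of_adj hj]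
  exact isAcyclic_iff_forall_adj_isBridge.mp hG hj <|
    hij'.reachable.trans ((hju.trans hj'u.symm).mono hle).symm

end SimpleGraph

section CavityDynamics

def IsLocalUpdate {V X A : Type*} (G : SimpleGraph V) (upd : V → X → (V → ℕ → A) → ℕ → A) :
    Prop :=
  ∀ v xv (h h' : V → ℕ → A) (t : ℕ),
    (∀ j, G.Adj v j ∨ j = v → ∀ t' < t, h j t' = h' j t') → upd v xv h t = upd v xv h' t

variable {V X A : Type*} {G : SimpleGraph V} {upd : V → X → (V → ℕ → A) → ℕ → A}
  {traj ztraj : (V → X) → V → ℕ → A} {x : V → X} {i : V} {ξ : X} {ω : V → ℕ → A} {τ : ℕ → A}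
  {t : ℕ}

theorem dependsOn_ztraj (hloc : IsLocalUpdate G upd) (hz1 : ∀ x t', ztraj x i t' = τ t')
    (hz2 : ∀ x v t', v ≠ i → ztraj x v t' = upd v (x v) (ztraj x) t') {v : V} (hv : v ≠ i)
    (t' : ℕ) : DependsOn (fun x => ztraj x v t') {u | (G.deleteIncidenceSet i).Reachable v u} := by
  induction t' using Nat.strong_induction_on generalizing v with
  | _ t' ih =>
    intro x y hxy
    show ztraj x v t' = ztraj y v t'
    rw [hz2 x v t' hv, hz2 y v t' hv, hxy v (SimpleGraph.Reachable.refl v)]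
    refine hloc _ _ _ _ _ fun j hj t'' ht'' => ?_
    rcases eq_or_ne j i with rfl | hji
    · rw [hz1, hz1]
    · refine ih t'' ht'' hji fun u hu => hxy u ?_
      rcases hj with hadj | rfl
      · exact (SimpleGraph.deleteIncidenceSet_adj.mpr ⟨hadj, hv, hji⟩).reachable.trans hu
      · exact hu

variable [DecidableEq V]

/-- Once the neighbours of `i` have played `ω`, agent `i` itself plays `τ`, which is what it
plays in the zombie process. -/
theorem traj_eq_ztraj_of_consistent (hloc : IsLocalUpdate G upd)
    (htraj : ∀ x v t, traj x v t = upd v (x v) (traj x) t)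
    (hτ : ∀ t', τ t' = upd i ξ (fun j t'' => if j = i then τ t'' else ω j t'') t')
    (hz1 : ∀ x t', ztraj x i t' = τ t')
    (hz2 : ∀ x v t', v ≠ i → ztraj x v t' = upd v (x v) (ztraj x) t') (hx : x i = ξ)
    (hcons : ∀ j, G.Adj i j → ∀ t' < t, traj x j t' = ω j t' ∨ ztraj x j t' = ω j t') :
    ∀ t' ≤ t, ∀ v, traj x v t' = ztraj x v t' := by
  intro t'
  induction t' using Nat.strong_induction_on with
  | _ t' ih =>
    intro ht' v
    have hpast : ∀ t'' < t', ∀ u, traj x u t'' = ztraj x u t'' :=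
      fun t'' h => ih t'' h (h.le.trans ht')
    rcases eq_or_ne v i with rfl | hv
    · rw [hz1, hτ, htraj, hx]
      refine hloc _ _ _ _ _ fun j hj t'' ht'' => ?_
      rcases hj with hj | rfl
      · rw [if_neg hj.ne']
        exact (hcons j hj t'' (ht''.trans_le ht')).elim id (hpast t'' ht'' j).trans
      · rw [if_pos rfl, hpast t'' ht'', hz1]
    · rw [htraj, hz2 x v t' hv]
      exact hloc _ _ _ _ _ fun j _ t'' ht'' => hpast t'' ht'' j

theorem consistent_traj_iff_consistent_ztraj (hloc : IsLocalUpdate G upd)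
    (htraj : ∀ x v t, traj x v t = upd v (x v) (traj x) t)
    (hτ : ∀ t', τ t' = upd i ξ (fun j t'' => if j = i then τ t'' else ω j t'') t')
    (hz1 : ∀ x t', ztraj x i t' = τ t')
    (hz2 : ∀ x v t', v ≠ i → ztraj x v t' = upd v (x v) (ztraj x) t') (hx : x i = ξ) :
    (∀ j, G.Adj i j → ∀ t' < t, traj x j t' = ω j t') ↔
      ∀ j, G.Adj i j → ∀ t' < t, ztraj x j t' = ω j t' := by
  have hagree := traj_eq_ztraj_of_consistent (t := t) hloc htraj hτ hz1 hz2 hx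
  constructor
  · intro h j hj t' ht'
    rw [← hagree (fun j hj t' ht' => .inl (h j hj t' ht')) t' ht'.le]
    exact h j hj t' ht'
  · intro h j hj t' ht'
    rw [hagree (fun j hj t' ht' => .inr (h j hj t' ht')) t' ht'.le]
    exact h j hj t' ht'

end CavityDynamics

theorem posterior_cavity_factorization_general {V X A S : Type*} [Fintype V]
    [DecidableEq V] [Fintype X] [DecidableEq X] [DecidableEq A]
    (G : SimpleGraph V) [DecidableRel G.Adj] (htree : G.IsTree)
    (upd : V → X → (V → ℕ → A) → ℕ → A)
    (hloc : ∀ v xv (h h' : V → ℕ → A) (t : ℕ),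
      (∀ j, G.Adj v j ∨ j = v → ∀ t' < t, h j t' = h' j t') →
      upd v xv h t = upd v xv h' t)
    (traj : (V → X) → V → ℕ → A)
    (htraj : ∀ x v t, traj x v t = upd v (x v) (fun j t' => traj x j t') t)
    (π : S → ℝ) (ν : S → V → X → ℝ)
    (hν1 : ∀ s v, ∑ χ, ν s v χ = 1)
    (i : V) (ξ : X) (ω : V → ℕ → A) (t : ℕ)
    (τ : ℕ → A)
    (hτ : ∀ t', τ t' =
      upd i ξ (fun j t'' => if j = i then τ t'' else ω j t'') t')
    (ztraj : (V → X) → V → ℕ → A)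
    (hz1 : ∀ x t', ztraj x i t' = τ t')
    (hz2 : ∀ x v t', v ≠ i →
      ztraj x v t' = upd v (x v) (fun j t'' => ztraj x j t'') t') :
    ∀ s : S,
      π s * ν s i ξ *
        (∑ x : V → X,
          if x i = ξ ∧ ∀ j ∈ G.neighborFinset i, ∀ t' < t, traj x j t' = ω j t'
          then ∏ v ∈ Finset.univ.erase i, ν s v (x v) else 0) =
      π s * ν s i ξ *
        ∏ j ∈ G.neighborFinset i,
          (∑ x : V → X,
            if ∀ t' < t, ztraj x j t' = ω j t'
            then ∏ v, ν s v (x v) else 0) := by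
  intro s
  let F : V → (V → X) → ℝ := fun j x => if ∀ t' < t, ztraj x j t' = ω j t' then 1 else 0
  let branch : V → Set V := fun j => {u | (G.deleteIncidenceSet i).Reachable j u}
  have hF : ∀ j ∈ G.neighborFinset i, DependsOn (F j) (branch j) := fun j hj x y hxy => by
    have hz : ∀ t', ztraj x j t' = ztraj y j t' := fun t' =>
      dependsOn_ztraj hloc hz1 hz2 (G.ne_of_adj ((G.mem_neighborFinset i j).mp hj)).symm t' hxy
    simp only [F, hz]
  have hFi : DependsOn (fun x => ∏ j ∈ G.neighborFinset i, F j x) {i}ᶜ :=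
    dependsOn_finset_prod fun j hj => (hF j hj).mono fun u hu hui =>
      G.ne_of_adj ((G.mem_neighborFinset i j).mp hj)
        (SimpleGraph.eq_of_reachable_deleteIncidenceSet (hui ▸ hu)).symm
  have hbranch : (G.neighborFinset i : Set V).PairwiseDisjoint branch := by
    simpa using htree.isAcyclic.pairwiseDisjoint_reachable_deleteIncidenceSet i
  have hsummand : ∀ x : V → X, ν s i ξ *
      (if x i = ξ ∧ ∀ j ∈ G.neighborFinset i, ∀ t' < t, traj x j t' = ω j t'
        then ∏ v ∈ Finset.univ.erase i, ν s v (x v) else 0) =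
      (if x i = ξ then 1 else 0) * (∏ j ∈ G.neighborFinset i, F j x) * ∏ v, ν s v (x v) := by
    intro x
    by_cases hx : x i = ξ
    · simp only [F, prod_boole, SimpleGraph.mem_neighborFinset, hx, true_and,
        consistent_traj_iff_consistent_ztraj hloc htraj hτ hz1 hz2 hx,
        ← mul_prod_erase univ _ (mem_univ i)]
      split_ifs <;> simp
    · simp [hx]
  calc π s * ν s i ξ * _
      = π s * ∑ x : V → X, (if x i = ξ then 1 else 0) * (∏ j ∈ G.neighborFinset i, F j x) *
          ∏ v, ν s v (x v) := by
        simp_rw [mul_assoc (π s), mul_sum, hsummand]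
    _ = π s * ν s i ξ * ∏ j ∈ G.neighborFinset i, ∑ x : V → X, F j x * ∏ v, ν s v (x v) := by
        rw [sum_mul_mul_prod_of_dependsOn (hν1 s) (fun x y hxy => by simp [hxy i rfl]) hFi,
          sum_mul_prod_eq_sum_apply (hν1 s) i (fun χ => if χ = ξ then 1 else 0),
          sum_prod_mul_prod_of_pairwiseDisjoint (hν1 s) hbranch hF]
        simp [mul_assoc]
    _ = _ := by simp only [F, boole_mul]

/-- Factorization of the Bayesian posterior via the dynamic cavity method:
`P(s | x_i = ξ, σ_{∂i}^{t-1} = ω) ∝ P(s)·P(ξ|s)·∏_{j ∈ ∂i} Q(σ_j^{t-1} | σ_i^{t-1}, s)`,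
where `σ_i^{t-1} = τ` is agent `i`'s own (deterministic) trajectory, computed
from `ξ` and `ω`, and `Q` denotes zombie-process probabilities (agent `i`
replaced by a zombie playing `τ`). Stated as an equality, for every state `s`,
of the posterior numerators `P(s)·P(ξ|s)·P(σ_{∂i}^{t-1} = ω | s, x_i = ξ)` and
`P(s)·P(ξ|s)·∏_{j ∈ ∂i} Q(σ_j^{t-1} = ω_j | τ, s)`. -/
theorem posterior_cavity_factorization {V X A S : Type*} [Fintype V]
    [DecidableEq V] [Fintype X] [DecidableEq X] [DecidableEq A]
    (G : SimpleGraph V) [DecidableRel G.Adj] (htree : G.IsTree)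
    (upd : V → X → (V → ℕ → A) → ℕ → A)
    (hloc : ∀ v xv (h h' : V → ℕ → A) (t : ℕ),
      (∀ j, G.Adj v j ∨ j = v → ∀ t' < t, h j t' = h' j t') →
      upd v xv h t = upd v xv h' t)
    (traj : (V → X) → V → ℕ → A)
    (htraj : ∀ x v t, traj x v t = upd v (x v) (fun j t' => traj x j t') t)
    (π : S → ℝ) (ν : S → V → X → ℝ)
    (hν : ∀ s v χ, 0 ≤ ν s v χ) (hν1 : ∀ s v, ∑ χ, ν s v χ = 1)
    (i : V) (ξ : X) (ω : V → ℕ → A) (t : ℕ)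
    (τ : ℕ → A)
    (hτ : ∀ t', τ t' =
      upd i ξ (fun j t'' => if j = i then τ t'' else ω j t'') t')
    (ztraj : (V → X) → V → ℕ → A)
    (hz1 : ∀ x t', ztraj x i t' = τ t')
    (hz2 : ∀ x v t', v ≠ i →
      ztraj x v t' = upd v (x v) (fun j t'' => ztraj x j t'') t') :
    ∀ s : S,
      π s * ν s i ξ *
        (∑ x : V → X,
          if x i = ξ ∧ ∀ j ∈ G.neighborFinset i, ∀ t' < t, traj x j t' = ω j t'
          then ∏ v ∈ Finset.univ.erase i, ν s v (x v) else 0) =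
      π s * ν s i ξ *
        ∏ j ∈ G.neighborFinset i,
          (∑ x : V → X,
            if ∀ t' < t, ztraj x j t' = ω j t'
            then ∏ v, ν s v (x v) else 0) :=
  posterior_cavity_factorization_general G htree upd hloc traj htraj π ν hν1 i ξ ω t τ hτ ztraj hz1
    hz2
end

section
/- Theorem (doubly exponential convergence of majority dynamics on regular trees): On an undirected d-regular tree with d ≥ 5, binary state s with uniform prior, and initial votes correct with probability 1−δ independently given s, if δ < (2e(d-1)/(d-2))^{-(d-2)/(d-4)}, then for every node i, -log P(σ̂_i(t) ≠ s) ∈ Ω(((d-2)/2)^t). -/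
/-!
Condition on the state, say `s = 1`, so that a vote is wrong when it is `-1`. Freeze a vertex
at the wrong vote: in a tree the subtrees below its neighbours are then driven by disjoint, hence
independent, families of inputs. A neighbour `j` of a frozen vertex votes wrong at time `t + 1`
only if at least `k = (d - 1) / 2` of its other neighbours vote wrong at time `t` once `j` itself is
frozen, because freezing more vertices at `-1` only lowers votes and, in a tree, freezing `j`
hides its parent from the subtrees below it. A union bound over `k`-subsets gives the recursion
`δ_{t+1} ≤ C(d-1, k) δ_t ^ k` for the error probability `δ_t` of such a vertex, and the root errs
with probability at most `2 δ_t`. So `u_t = -log δ_t` satisfies `u_{t+1} ≥ k u_t - log C(d-1, k)`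
and grows like `k ^ t ≥ ((d - 2) / 2) ^ t` as soon as `-log δ` exceeds the fixed point
`log C(d-1, k) / (k - 1)`; the estimate `C(d-1, k) ≤ (2e(d-1)/(d-2)) ^ k` turns this into the
hypothesis on `δ`. Finally the error probability is positive, so its logarithm is not the junk
value `log 0 = 0`.
-/

open MeasureTheory ProbabilityTheory Finset Real

namespace MajorityDynamics

def majorityUpdate (s c : ℤ) : ℤ :=
  if 0 < s then 1 else if s < 0 then -1 else c

lemma majorityUpdate_neg (s c : ℤ) : majorityUpdate (-s) (-c) = -majorityUpdate s c := by
  unfold majorityUpdate; split_ifs <;> omega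

lemma majorityUpdate_eq_one_or {s c : ℤ} (hc : c = 1 ∨ c = -1) :
    majorityUpdate s c = 1 ∨ majorityUpdate s c = -1 := by
  unfold majorityUpdate; split_ifs <;> omega

lemma majorityUpdate_mono {s s' c : ℤ} (hc : c = 1 ∨ c = -1) (h : s ≤ s') :
    majorityUpdate s c ≤ majorityUpdate s' c := by
  unfold majorityUpdate; split_ifs <;> omega

lemma majorityUpdate_of_neg {s c : ℤ} (hs : s < 0) : majorityUpdate s c = -1 := by
  unfold majorityUpdate; split_ifs <;> omega

lemma nonpos_of_majorityUpdate_eq_neg_one {s c : ℤ} (h : majorityUpdate s c = -1) : s ≤ 0 := by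
  unfold majorityUpdate at h; split_ifs at h <;> omega

lemma card_le_two_mul_card_filter_eq_neg_one {ι : Type*} {N : Finset ι} {y : ι → ℤ}
    (hy : ∀ i ∈ N, y i = 1 ∨ y i = -1) (hsum : ∑ i ∈ N, y i ≤ 0) :
    #N ≤ 2 * #{i ∈ N | y i = -1} := by
  have hcount : ∑ i ∈ N, y i = #N - 2 * (#{i ∈ N | y i = -1} : ℤ) := by
    rw [natCast_card_filter, mul_sum, card_eq_sum_ones, Nat.cast_sum, ← sum_sub_distrib]
    refine sum_congr rfl fun i hi => ?_
    rcases hy i hi with h | h <;> simp [h]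
  omega

lemma exists_subset_card_eq_of_le_card_filter {α : Type*} {s : Finset α} {p : α → Prop}
    [DecidablePred p] {k : ℕ} (h : k ≤ #{a ∈ s | p a}) : ∃ T ⊆ s, #T = k ∧ ∀ a ∈ T, p a := by
  obtain ⟨T, hT, hk⟩ := exists_subset_card_eq h
  exact ⟨T, hT.trans (filter_subset _ _), hk, fun a ha => (mem_filter.mp (hT ha)).2⟩

lemma choose_half_le_two_mul_choose (d : ℕ) :
    d.choose ((d - 1) / 2) ≤ 2 * (d - 1).choose ((d - 1) / 2) := by
  rcases Nat.lt_or_ge d 3 with hd | hd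
  · interval_cases d <;> simp
  obtain ⟨n, rfl⟩ : ∃ n, d = n + 1 := ⟨d - 1, by omega⟩
  obtain ⟨k, hk⟩ : ∃ k, n / 2 = k + 1 := ⟨n / 2 - 1, by omega⟩
  simp only [Nat.add_sub_cancel, hk, Nat.choose_succ_succ']
  have := Nat.choose_le_succ_of_lt_half_left (r := k) (n := n) (by omega)
  omega

section Reach

variable {V : Type*} (G : SimpleGraph V)

def reachAvoiding (A : Set V) (v : V) : Set V :=
  {u | ∃ p : G.Walk v u, ∀ w ∈ p.support, w ∉ A}

variable {G} {A : Set V} {v : V}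

lemma mem_reachAvoiding_self (hv : v ∉ A) : v ∈ reachAvoiding G A v :=
  ⟨.nil, by simpa using hv⟩

lemma reachAvoiding_subset_of_adj {u : V} (hv : v ∉ A) (hadj : G.Adj v u) :
    reachAvoiding G A u ⊆ reachAvoiding G A v := by
  rintro w ⟨p, hp⟩
  refine ⟨.cons hadj p, fun z hz => ?_⟩
  rcases List.mem_cons.mp (SimpleGraph.Walk.support_cons hadj p ▸ hz) with rfl | h
  exacts [hv, hp z h]

lemma _root_.SimpleGraph.IsTree.mem_support_of_adj (htree : G.IsTree) {j a b : V}
    (ha : G.Adj j a) (hb : G.Adj j b) (hab : a ≠ b) (p : G.Walk a b) : j ∈ p.support := by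
  have hbridge := SimpleGraph.isAcyclic_iff_forall_adj_isBridge.mp htree.isAcyclic ha.symm
  have hedge := SimpleGraph.isBridge_iff_forall_walk_mem_edges.mp hbridge (p.concat hb.symm)
  rw [SimpleGraph.Walk.edges_concat, List.concat_eq_append, List.mem_append] at hedge
  rcases hedge with h | h
  · exact p.snd_mem_support_of_mem_edges h
  · simp only [List.mem_singleton, Sym2.eq, Sym2.rel_iff'] at h
    grind

lemma _root_.SimpleGraph.IsTree.disjoint_reachAvoiding (htree : G.IsTree) {j a b : V}
    (ha : G.Adj j a) (hb : G.Adj j b) (hab : a ≠ b) :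
    Disjoint (reachAvoiding G {j} a) (reachAvoiding G {j} b) := by
  rw [Set.disjoint_left]
  rintro u ⟨p, hp⟩ ⟨q, hq⟩
  rcases (SimpleGraph.Walk.mem_support_append_iff _ _).mp
    (htree.mem_support_of_adj ha hb hab (p.append q.reverse)) with h | h
  · exact hp j h rfl
  · exact hq j (by simpa using h) rfl

end Reach

section Deterministic

variable {V : Type*} (G : SimpleGraph V) [∀ v, Fintype (G.neighborSet v)]

open Classical in
noncomputable def frozenDyn (A : Set V) (x : V → ℤ) (c : ℕ → V → ℤ) : ℕ → V → ℤ
  | 0, v => if v ∈ A then -1 else x v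
  | t + 1, v => if v ∈ A then -1 else
      majorityUpdate (∑ j ∈ G.neighborFinset v, frozenDyn A x c t j) (c t v)

def ballFinset [DecidableEq V] : ℕ → V → Finset V
  | 0, v => {v}
  | t + 1, v => insert v ((G.neighborFinset v).biUnion (ballFinset t))

variable {G} {A B : Set V} {x : V → ℤ} {c : ℕ → V → ℤ} {t : ℕ} {v : V}

@[simp]
lemma frozenDyn_of_mem (hv : v ∈ A) (t : ℕ) : frozenDyn G A x c t v = -1 := by
  cases t <;> simp [frozenDyn, hv]

lemma frozenDyn_zero_of_notMem (hv : v ∉ A) : frozenDyn G A x c 0 v = x v := by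
  simp [frozenDyn, hv]

lemma frozenDyn_succ_of_notMem (hv : v ∉ A) : frozenDyn G A x c (t + 1) v =
    majorityUpdate (∑ j ∈ G.neighborFinset v, frozenDyn G A x c t j) (c t v) := by
  simp [frozenDyn, hv]

lemma frozenDyn_eq_one_or (hx : ∀ v, x v = 1 ∨ x v = -1) (hc : ∀ t v, c t v = 1 ∨ c t v = -1)
    (t : ℕ) (v : V) : frozenDyn G A x c t v = 1 ∨ frozenDyn G A x c t v = -1 := by
  by_cases hv : v ∈ A
  · simp [hv]
  cases t with
  | zero => rw [frozenDyn_zero_of_notMem hv]; exact hx v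
  | succ t => rw [frozenDyn_succ_of_notMem hv]; exact majorityUpdate_eq_one_or (hc t v)

lemma neg_one_le_frozenDyn (hx : ∀ v, x v = 1 ∨ x v = -1) (hc : ∀ t v, c t v = 1 ∨ c t v = -1)
    (t : ℕ) (v : V) : -1 ≤ frozenDyn G A x c t v := by
  rcases frozenDyn_eq_one_or (G := G) (A := A) hx hc t v with h | h <;> omega

lemma frozenDyn_le_of_subset (hx : ∀ v, x v = 1 ∨ x v = -1) (hc : ∀ t v, c t v = 1 ∨ c t v = -1)
    (hAB : A ⊆ B) (t : ℕ) (v : V) : frozenDyn G B x c t v ≤ frozenDyn G A x c t v := by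
  induction t generalizing v with
  | zero => ?_
  | succ t ih => ?_
  all_goals
    by_cases hB : v ∈ B
    · rw [frozenDyn_of_mem hB]; exact neg_one_le_frozenDyn hx hc _ v
    have hA : v ∉ A := fun h => hB (hAB h)
  · rw [frozenDyn_zero_of_notMem hA, frozenDyn_zero_of_notMem hB]
  · rw [frozenDyn_succ_of_notMem hA, frozenDyn_succ_of_notMem hB]
    exact majorityUpdate_mono (hc t v) (sum_le_sum fun j _ => ih j)

lemma frozenDyn_eq_neg_one_of_subset (hx : ∀ v, x v = 1 ∨ x v = -1)
    (hc : ∀ t v, c t v = 1 ∨ c t v = -1) (hAB : A ⊆ B) (h : frozenDyn G A x c t v = -1) :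
    frozenDyn G B x c t v = -1 := by
  have := frozenDyn_le_of_subset (G := G) hx hc hAB t v
  have := neg_one_le_frozenDyn (G := G) (A := B) hx hc t v
  omega

lemma card_le_two_mul_of_frozenDyn_succ (hx : ∀ v, x v = 1 ∨ x v = -1)
    (hc : ∀ t v, c t v = 1 ∨ c t v = -1) (hv : v ∉ A) (h : frozenDyn G A x c (t + 1) v = -1) :
    #(G.neighborFinset v) ≤ 2 * #{w ∈ G.neighborFinset v | frozenDyn G A x c t w = -1} := by
  rw [frozenDyn_succ_of_notMem hv] at h
  exact card_le_two_mul_card_filter_eq_neg_one (fun w _ => frozenDyn_eq_one_or hx hc t w)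
    (nonpos_of_majorityUpdate_eq_neg_one h)

lemma frozenDyn_eq_of_reachAvoiding (hAB : A ⊆ B)
    (h : ∀ u ∈ reachAvoiding G A v, u ∈ B → u ∈ A) :
    frozenDyn G B x c t v = frozenDyn G A x c t v := by
  induction t generalizing v with
  | zero => ?_
  | succ t ih => ?_
  all_goals
    by_cases hA : v ∈ A
    · rw [frozenDyn_of_mem hA, frozenDyn_of_mem (hAB hA)]
    have hB : v ∉ B := fun hB => hA (h v (mem_reachAvoiding_self hA) hB)
  · rw [frozenDyn_zero_of_notMem hA, frozenDyn_zero_of_notMem hB]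
  · rw [frozenDyn_succ_of_notMem hA, frozenDyn_succ_of_notMem hB]
    congr 1
    refine sum_congr rfl fun j hj => ih fun u hu => h u ?_
    exact reachAvoiding_subset_of_adj hA ((G.mem_neighborFinset v j).mp hj) hu

lemma frozenDyn_empty_eq_neg_one_of_ball [DecidableEq V]
    (hdeg : ∀ v, 0 < G.degree v) {i : V}
    (h : ∀ u ∈ ballFinset G t i, x u = -1) : frozenDyn G ∅ x c t i = -1 := by
  induction t generalizing i with
  | zero => rw [frozenDyn_zero_of_notMem (Set.notMem_empty i)]; exact h i (by simp [ballFinset])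
  | succ t ih =>
    have hnbr : ∀ j ∈ G.neighborFinset i, frozenDyn G ∅ x c t j = -1 := fun j hj =>
      ih fun u hu => h u (mem_insert_of_mem (mem_biUnion.mpr ⟨j, hj, hu⟩))
    rw [frozenDyn_succ_of_notMem (Set.notMem_empty i), sum_congr rfl hnbr]
    exact majorityUpdate_of_neg (by simpa using hdeg i)

lemma eq_frozenDyn_empty {y : ℕ → V → ℤ}
    (hupd : ∀ t v, y (t + 1) v = majorityUpdate (∑ j ∈ G.neighborFinset v, y t j) (c t v))
    (t : ℕ) (v : V) : y t v = frozenDyn G ∅ (y 0) c t v := by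
  induction t generalizing v with
  | zero => rw [frozenDyn_zero_of_notMem (Set.notMem_empty v)]
  | succ t ih =>
    rw [hupd, frozenDyn_succ_of_notMem (Set.notMem_empty v), sum_congr rfl fun j _ => ih j]

end Deterministic

section Tree

variable {V : Type*} {G : SimpleGraph V} [∀ v, Fintype (G.neighborSet v)] {d : ℕ}
  {x : V → ℤ} {c : ℕ → V → ℤ} {t : ℕ}

lemma le_card_wrong_of_frozenDyn_empty (hreg : ∀ v, G.degree v = d)
    (hx : ∀ v, x v = 1 ∨ x v = -1) (hc : ∀ t v, c t v = 1 ∨ c t v = -1) {i : V}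
    (h : frozenDyn G ∅ x c (t + 1) i = -1) :
    (d - 1) / 2 ≤ #{w ∈ G.neighborFinset i | frozenDyn G {i} x c t w = -1} := by
  have hmaj := card_le_two_mul_of_frozenDyn_succ hx hc (Set.notMem_empty i) h
  rw [G.card_neighborFinset_eq_degree, hreg] at hmaj
  have := card_le_card <| monotone_filter_right (G.neighborFinset i) fun w _ =>
    frozenDyn_eq_neg_one_of_subset (G := G) hx hc (Set.empty_subset {i}) (t := t) (v := w)
  omega

lemma le_card_wrong_of_frozenDyn_adj [DecidableEq V] (htree : G.IsTree)
    (hreg : ∀ v, G.degree v = d)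
    (hx : ∀ v, x v = 1 ∨ x v = -1) (hc : ∀ t v, c t v = 1 ∨ c t v = -1) {i j : V}
    (hadj : G.Adj i j) (h : frozenDyn G {i} x c (t + 1) j = -1) :
    (d - 1) / 2 ≤ #{w ∈ (G.neighborFinset j).erase i | frozenDyn G {j} x c t w = -1} := by
  have hmaj := card_le_two_mul_of_frozenDyn_succ hx hc (by simpa using hadj.ne') h
  rw [G.card_neighborFinset_eq_degree, hreg] at hmaj
  have hsub : {w ∈ G.neighborFinset j | frozenDyn G {i} x c t w = -1} ⊆
      insert i {w ∈ (G.neighborFinset j).erase i | frozenDyn G {j} x c t w = -1} := by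
    intro w hw
    rw [mem_filter, G.mem_neighborFinset] at hw
    rcases eq_or_ne w i with rfl | hwi
    · exact mem_insert_self _ _
    refine mem_insert_of_mem (mem_filter.mpr ⟨mem_erase.mpr ⟨hwi, by simpa using hw.1⟩, ?_⟩)
    have hi : i ∉ reachAvoiding G {j} w := fun hi => Set.disjoint_left.mp
      (htree.disjoint_reachAvoiding hw.1 hadj.symm hwi) hi
      (mem_reachAvoiding_self (by simpa using hadj.ne))
    rw [← frozenDyn_eq_of_reachAvoiding (B := {i, j}) (by simp)
      (by rintro u hu (rfl | rfl); exacts [absurd hu hi, rfl])]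
    exact frozenDyn_eq_neg_one_of_subset hx hc (by simp) hw.2
  have := (card_le_card hsub).trans (card_insert_le _ _)
  omega

end Tree

section Independence

variable {Ω : Type*} [mΩ : MeasurableSpace Ω] {μ : Measure Ω}

lemma iIndep.measure_biInter_eq_prod {ι κ : Type*} {m : ι → MeasurableSpace Ω}
    (h_le : ∀ i, m i ≤ mΩ) (h : iIndep m μ) {S : Finset κ} {I : κ → Set ι}
    (hdisj : (S : Set κ).PairwiseDisjoint I) {E : κ → Set Ω}
    (hE : ∀ j ∈ S, MeasurableSet[⨆ i ∈ I j, m i] (E j)) :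
    μ (⋂ j ∈ S, E j) = ∏ j ∈ S, μ (E j) := by
  classical
  induction S using Finset.induction with
  | empty => have := h.isProbabilityMeasure; simp
  | insert j S hj ih =>
    rw [coe_insert] at hdisj
    have hindep : Indep (⨆ i ∈ I j, m i) (⨆ i ∈ ⋃ j' ∈ (S : Set κ), I j', m i) μ :=
      indep_iSup_of_disjoint h_le h <| Set.disjoint_iUnion₂_right.mpr fun j' hj' =>
        hdisj (Set.mem_insert j _) (Set.mem_insert_of_mem _ hj') fun h => hj (h ▸ hj')
    have hrest : MeasurableSet[⨆ i ∈ ⋃ j' ∈ (S : Set κ), I j', m i] (⋂ j' ∈ S, E j') :=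
      Finset.measurableSet_biInter _ fun j' hj' => by
        have hle : (⨆ i ∈ I j', m i) ≤ ⨆ i ∈ ⋃ j' ∈ (S : Set κ), I j', m i :=
          biSup_mono (Set.subset_biUnion_of_mem (u := I) hj')
        exact hle _ (hE j' (mem_insert_of_mem hj'))
    rw [set_biInter_insert, prod_insert hj,
      (Indep_iff _ _ _).mp hindep _ _ (hE j (mem_insert_self _ _)) hrest,
      ih (hdisj.subset (Set.subset_insert _ _)) fun j' hj' => hE j' (mem_insert_of_mem hj')]

lemma measure_exists_subset_card_eq_le {ι : Type*} (C : Finset ι) (E : ι → Set Ω) (k : ℕ)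
    {p : ENNReal} (hE : ∀ S ⊆ C, μ (⋂ i ∈ S, E i) = ∏ i ∈ S, μ (E i))
    (hp : ∀ i ∈ C, μ (E i) ≤ p) :
    μ {ω | ∃ S ⊆ C, #S = k ∧ ∀ i ∈ S, ω ∈ E i} ≤ (#C).choose k * p ^ k := by
  have hsub : {ω | ∃ S ⊆ C, #S = k ∧ ∀ i ∈ S, ω ∈ E i} ⊆
      ⋃ S ∈ C.powersetCard k, ⋂ i ∈ S, E i := by
    rintro ω ⟨S, hSC, hS, hω⟩
    exact Set.mem_biUnion (mem_powersetCard.mpr ⟨hSC, hS⟩) (Set.mem_iInter₂.mpr hω)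
  calc μ _ ≤ ∑ S ∈ C.powersetCard k, μ (⋂ i ∈ S, E i) :=
        (measure_mono hsub).trans (measure_biUnion_finset_le _ _)
    _ ≤ ∑ S ∈ C.powersetCard k, p ^ k := sum_le_sum fun S hS => by
        obtain ⟨hSC, hS⟩ := mem_powersetCard.mp hS
        rw [hE S hSC, ← hS, ← prod_const]
        exact prod_le_prod' fun i hi => hp i (hSC hi)
    _ = (#C).choose k * p ^ k := by rw [sum_const, card_powersetCard, nsmul_eq_mul]

end Independence

section Recursion

def powRec (δ C : ℝ) (k : ℕ) : ℕ → ℝ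
  | 0 => δ
  | t + 1 => C * powRec δ C k t ^ k

lemma powRec_pos {δ C : ℝ} (hδ : 0 < δ) (hC : 0 < C) (k : ℕ) (t : ℕ) : 0 < powRec δ C k t := by
  induction t with
  | zero => exact hδ
  | succ t ih => exact mul_pos hC (pow_pos ih k)

lemma powRec_nonneg {δ C : ℝ} (hδ : 0 ≤ δ) (hC : 0 ≤ C) (k : ℕ) (t : ℕ) :
    0 ≤ powRec δ C k t := by
  induction t with
  | zero => exact hδ
  | succ t ih => exact mul_nonneg hC (pow_nonneg ih k)

/-- `u_t = -log (powRec δ C k t)` satisfies `u_{t+1} = k u_t - log C`, whose fixed point is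
`log C / (k - 1)`. -/
lemma neg_log_powRec {δ C : ℝ} (hδ : 0 < δ) (hC : 0 < C) {k : ℕ} (hk : k ≠ 1) (t : ℕ) :
    -log (powRec δ C k t) =
      k ^ t * (-log δ - log C / (k - 1)) + log C / (k - 1) := by
  have hk' : (k : ℝ) - 1 ≠ 0 := sub_ne_zero.mpr (by exact_mod_cast hk)
  induction t with
  | zero => simp [powRec]
  | succ t ih =>
    rw [powRec, log_mul hC.ne' (pow_pos (powRec_pos hδ hC k t) k).ne', log_pow]
    have : log C = (k - 1) * (log C / (k - 1)) := by field_simp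
    linear_combination k * ih - this

lemma choose_le_exp_mul_div_pow (n : ℕ) {k : ℕ} (hk : 0 < k) :
    (n.choose k : ℝ) ≤ (exp 1 * n / k) ^ k := by
  have hfac : (k : ℝ) ^ k / k.factorial ≤ exp 1 ^ k := by
    rw [exp_one_pow]; exact pow_div_factorial_le_exp _ (Nat.cast_nonneg k) k
  calc (n.choose k : ℝ) ≤ (n : ℝ) ^ k / k.factorial := Nat.choose_le_pow_div k n
    _ = (n : ℝ) ^ k / k ^ k * (k ^ k / k.factorial) := by field_simp
    _ ≤ (n : ℝ) ^ k / k ^ k * exp 1 ^ k := by gcongr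
    _ = (exp 1 * n / k) ^ k := by rw [div_pow, mul_pow]; ring

/-- The hypothesis on `δ` puts `-log δ` above the fixed point `log C(d-1, k) / (k - 1)`, using
`C(d-1, k) ≤ (2e(d-1)/(d-2)) ^ k` and `k / (k - 1) ≤ (d - 2) / (d - 4)`. -/
lemma log_choose_div_lt_neg_log {d : ℕ} (hd : 5 ≤ d) {δ : ℝ} (hδ : 0 < δ)
    (hδsmall : δ < (2 * exp 1 * ((d : ℝ) - 1) / ((d : ℝ) - 2)) ^
      (-(((d : ℝ) - 2) / ((d : ℝ) - 4)))) :
    log ((d - 1).choose ((d - 1) / 2)) / (((d - 1) / 2 : ℕ) - 1) < -log δ := by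
  set k := (d - 1) / 2
  set M := 2 * exp 1 * ((d : ℝ) - 1) / ((d : ℝ) - 2)
  have hd' : (5 : ℝ) ≤ d := by exact_mod_cast hd
  have hk : (d : ℝ) - 2 ≤ 2 * k := by
    have : d ≤ 2 * k + 2 := by omega
    have : (d : ℝ) ≤ 2 * k + 2 := by exact_mod_cast this
    linarith
  have hM : 1 ≤ M := by
    rw [le_div_iff₀ (by linarith)]
    nlinarith [add_one_le_exp (1 : ℝ)]
  have hchoose : log ((d - 1).choose k) ≤ k * log M := by
    rw [← log_pow]
    refine log_le_log (by exact_mod_cast Nat.choose_pos (by omega)) <|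
      (choose_le_exp_mul_div_pow _ (by omega)).trans (pow_le_pow_left₀ (by positivity) ?_ k)
    rw [Nat.cast_sub (by omega), Nat.cast_one, div_le_div_iff₀ (by linarith) (by linarith)]
    have he : 0 ≤ exp 1 * ((d : ℝ) - 1) := mul_nonneg (exp_pos 1).le (by linarith)
    nlinarith [mul_le_mul_of_nonneg_left hk he]
  have hδlog : (d - 2) / (d - 4) * log M < -log δ := by
    have := log_lt_log hδ (hδsmall.trans_eq (rpow_def_of_pos (by linarith) _))
    rw [log_exp] at this
    linarith
  calc log ((d - 1).choose k) / (k - 1) ≤ k * log M / (k - 1) := by gcongr; linarith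
    _ ≤ (d - 2) / (d - 4) * log M := by
        rw [div_le_iff₀ (by linarith), div_mul_eq_mul_div, div_mul_eq_mul_div,
          le_div_iff₀ (by linarith)]
        nlinarith [log_nonneg hM]
    _ < -log δ := hδlog

lemma exists_le_neg_log_powRec {d : ℕ} (hd : 5 ≤ d) {δ : ℝ} (hδ : 0 < δ)
    (hδsmall : δ < (2 * exp 1 * ((d : ℝ) - 1) / ((d : ℝ) - 2)) ^
      (-(((d : ℝ) - 2) / ((d : ℝ) - 4)))) :
    ∃ A > (0 : ℝ), ∃ L : ℝ, ∀ t : ℕ, A * (((d : ℝ) - 2) / 2) ^ t + L ≤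
      -log (powRec δ ((d - 1).choose ((d - 1) / 2)) ((d - 1) / 2) t) := by
  set k := (d - 1) / 2
  set L := log ((d - 1).choose k) / (k - 1)
  refine ⟨-log δ - L, sub_pos.mpr (log_choose_div_lt_neg_log hd hδ hδsmall), L, fun t => ?_⟩
  rw [neg_log_powRec hδ (by exact_mod_cast Nat.choose_pos (by omega)) (by omega), mul_comm]
  have : ((d : ℝ) - 2) / 2 ≤ k := by
    have : d ≤ 2 * k + 2 := by omega
    have : (d : ℝ) ≤ 2 * k + 2 := by exact_mod_cast this
    linarith
  have hd' : (5 : ℝ) ≤ d := by exact_mod_cast hd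
  gcongr
  · linarith [log_choose_div_lt_neg_log hd hδ hδsmall]
  · linarith

end Recursion

section Random

variable {V Ω : Type*}

/-- All inputs of the dynamics in one family: the initial vote `x v` sits at `inl v` and the coin
`c t v` at `inr (t, v)`; both belong to the vertex `v = inputVertex a`. -/
def inputs (x : V → Ω → ℤ) (c : ℕ → V → Ω → ℤ) : V ⊕ ℕ × V → Ω → ℤ :=
  Sum.elim x fun p => c p.1 p.2

def inputVertex : V ⊕ ℕ × V → V := Sum.elim id Prod.snd

abbrev inputSigma (x : V → Ω → ℤ) (c : ℕ → V → Ω → ℤ) (R : Set V) : MeasurableSpace Ω :=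
  ⨆ a ∈ inputVertex ⁻¹' R, MeasurableSpace.comap (inputs x c a) inferInstance

lemma inputSigma_mono {x : V → Ω → ℤ} {c : ℕ → V → Ω → ℤ} {R R' : Set V} (h : R ⊆ R') :
    inputSigma x c R ≤ inputSigma x c R' :=
  biSup_mono fun _ ha => h ha

variable (G : SimpleGraph V) [∀ v, Fintype (G.neighborSet v)] (x : V → Ω → ℤ)
  (c : ℕ → V → Ω → ℤ)

def wrongEvent (A : Set V) (t : ℕ) (v : V) : Set Ω :=
  {ω | frozenDyn G A (x · ω) (c · · ω) t v = -1}

lemma measurable_frozenDyn (A : Set V) (t : ℕ) (v : V) :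
    Measurable[inputSigma x c (reachAvoiding G A v)]
      fun ω => frozenDyn G A (x · ω) (c · · ω) t v := by
  induction t generalizing v with
  | zero => ?_
  | succ t ih => ?_
  all_goals
    by_cases hv : v ∈ A
    · simp only [frozenDyn_of_mem hv]; exact measurable_const
  · simp only [frozenDyn_zero_of_notMem hv]
    exact (comap_measurable (inputs x c (.inl v))).mono
      (le_biSup (fun a => MeasurableSpace.comap (inputs x c a) inferInstance)
        (mem_reachAvoiding_self hv)) le_rfl
  · simp only [frozenDyn_succ_of_notMem hv]
    have hsum : Measurable[inputSigma x c (reachAvoiding G A v)]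
        fun ω => ∑ j ∈ G.neighborFinset v, frozenDyn G A (x · ω) (c · · ω) t j :=
      Finset.measurable_sum _ fun j hj => (ih j).mono (inputSigma_mono
        (reachAvoiding_subset_of_adj hv ((G.mem_neighborFinset v j).mp hj))) le_rfl
    have hcoin : Measurable[inputSigma x c (reachAvoiding G A v)] (c t v) :=
      (comap_measurable (inputs x c (.inr (t, v)))).mono
        (le_biSup (fun a => MeasurableSpace.comap (inputs x c a) inferInstance)
          (show inputVertex (.inr (t, v)) ∈ _ from mem_reachAvoiding_self hv)) le_rfl
    exact (measurable_of_countable (Function.uncurry majorityUpdate)).comp (hsum.prodMk hcoin)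

variable {G x c}

lemma wrongEvent_zero_of_notMem {A : Set V} {v : V} (hv : v ∉ A) :
    wrongEvent G x c A 0 v = {ω | x v ω = -1} := by
  ext ω; simp [wrongEvent, frozenDyn_zero_of_notMem hv]

variable [mΩ : MeasurableSpace Ω]

structure IndepSignInputs (μ : Measure Ω) (x : V → Ω → ℤ) (c : ℕ → V → Ω → ℤ) : Prop where
  measurable_x : ∀ v, Measurable (x v)
  measurable_c : ∀ t v, Measurable (c t v)
  x_eq : ∀ v ω, x v ω = 1 ∨ x v ω = -1
  c_eq : ∀ t v ω, c t v ω = 1 ∨ c t v ω = -1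
  indepFun : iIndepFun (inputs x c) μ

variable {μ : Measure Ω} {d : ℕ}

/-- Each event is measurable for the inputs of its own subtree, and these subtrees are disjoint. -/
lemma IndepSignInputs.measure_biInter_wrongEvent (h : IndepSignInputs μ x c) (htree : G.IsTree)
    {j : V} {S : Finset V} (hS : ∀ w ∈ S, G.Adj j w) (t : ℕ) :
    μ (⋂ w ∈ S, wrongEvent G x c {j} t w) = ∏ w ∈ S, μ (wrongEvent G x c {j} t w) := by
  refine iIndep.measure_biInter_eq_prod (m := fun a => MeasurableSpace.comap (inputs x c a) _)
    ?_ h.indepFun (I := fun w => inputVertex ⁻¹' reachAvoiding G {j} w) ?_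
    fun w _ => measurable_frozenDyn G x c {j} t w (measurableSet_singleton (-1))
  · rintro (v | ⟨r, v⟩)
    exacts [(h.measurable_x v).comap_le, (h.measurable_c r v).comap_le]
  · intro a ha b hb hab
    exact (htree.disjoint_reachAvoiding (hS a ha) (hS b hb) hab).preimage _

lemma IndepSignInputs.measure_wrongEvent_adj_le [DecidableEq V] (h : IndepSignInputs μ x c)
    (htree : G.IsTree) (hreg : ∀ v, G.degree v = d) {δ : ℝ} (hδ : 0 ≤ δ)
    (hinit : ∀ v, μ {ω | x v ω = -1} ≤ ENNReal.ofReal δ) (t : ℕ) {i j : V} (hadj : G.Adj i j) :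
    μ (wrongEvent G x c {i} t j) ≤
      ENNReal.ofReal (powRec δ ((d - 1).choose ((d - 1) / 2)) ((d - 1) / 2) t) := by
  induction t generalizing i j with
  | zero =>
    rw [wrongEvent_zero_of_notMem (by simpa using hadj.ne')]
    exact hinit j
  | succ t ih =>
    set k := (d - 1) / 2
    set C := (G.neighborFinset j).erase i
    have hC : ∀ w ∈ C, G.Adj j w := fun w hw => by simpa using (mem_erase.mp hw).2
    have hcard : #C = d - 1 := by
      rw [card_erase_of_mem (by simpa using hadj.symm), G.card_neighborFinset_eq_degree, hreg]
    calc μ (wrongEvent G x c {i} (t + 1) j)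
        ≤ μ {ω | ∃ S ⊆ C, #S = k ∧ ∀ w ∈ S, ω ∈ wrongEvent G x c {j} t w} :=
          measure_mono fun ω hω => exists_subset_card_eq_of_le_card_filter
            (p := fun w => frozenDyn G {j} (x · ω) (c · · ω) t w = -1)
            (le_card_wrong_of_frozenDyn_adj htree hreg (h.x_eq · ω) (h.c_eq · · ω) hadj hω)
      _ ≤ (#C).choose k * ENNReal.ofReal (powRec δ ((d - 1).choose k) k t) ^ k :=
          measure_exists_subset_card_eq_le C _ k
            (fun S hS => h.measure_biInter_wrongEvent htree (fun w hw => hC w (hS hw)) t)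
            fun w hw => ih (hC w hw)
      _ = ENNReal.ofReal (powRec δ ((d - 1).choose k) k (t + 1)) := by
          rw [hcard, ← ENNReal.ofReal_pow (powRec_nonneg hδ (Nat.cast_nonneg _) k t),
            ← ENNReal.ofReal_natCast, ← ENNReal.ofReal_mul (Nat.cast_nonneg _)]
          rfl

lemma IndepSignInputs.measure_wrongEvent_le [DecidableEq V] (h : IndepSignInputs μ x c)
    (htree : G.IsTree) (hreg : ∀ v, G.degree v = d) {δ : ℝ} (hδ : 0 ≤ δ)
    (hinit : ∀ v, μ {ω | x v ω = -1} ≤ ENNReal.ofReal δ) (t : ℕ) (i : V) :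
    μ (wrongEvent G x c ∅ t i) ≤
      ENNReal.ofReal (2 * powRec δ ((d - 1).choose ((d - 1) / 2)) ((d - 1) / 2) t) := by
  set k := (d - 1) / 2
  set b := powRec δ ((d - 1).choose k) k
  have hb : ∀ t, 0 ≤ b t := powRec_nonneg hδ (Nat.cast_nonneg _) k
  cases t with
  | zero =>
    rw [wrongEvent_zero_of_notMem (Set.notMem_empty i)]
    exact (hinit i).trans (ENNReal.ofReal_le_ofReal (by simp only [b, powRec]; linarith))
  | succ t =>
    have hN : ∀ w ∈ G.neighborFinset i, G.Adj i w := fun w hw => by simpa using hw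
    calc μ (wrongEvent G x c ∅ (t + 1) i)
        ≤ μ {ω | ∃ S ⊆ G.neighborFinset i, #S = k ∧ ∀ w ∈ S, ω ∈ wrongEvent G x c {i} t w} :=
          measure_mono fun ω hω => exists_subset_card_eq_of_le_card_filter
            (p := fun w => frozenDyn G {i} (x · ω) (c · · ω) t w = -1)
            (le_card_wrong_of_frozenDyn_empty hreg (h.x_eq · ω) (h.c_eq · · ω) hω)
      _ ≤ (#(G.neighborFinset i)).choose k * ENNReal.ofReal (b t) ^ k :=
          measure_exists_subset_card_eq_le _ _ k
            (fun S hS => h.measure_biInter_wrongEvent htree (fun w hw => hN w (hS hw)) t)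
            fun w hw => h.measure_wrongEvent_adj_le htree hreg hδ hinit t (hN w hw)
      _ ≤ ((2 * (d - 1).choose k : ℕ) : ENNReal) * ENNReal.ofReal (b t) ^ k := by
          rw [G.card_neighborFinset_eq_degree, hreg]
          gcongr
          exact choose_half_le_two_mul_choose d
      _ = ENNReal.ofReal (2 * b (t + 1)) := by
          rw [← ENNReal.ofReal_pow (hb t), ← ENNReal.ofReal_natCast,
            ← ENNReal.ofReal_mul (Nat.cast_nonneg _)]
          simp only [b, powRec]
          push_cast
          ring_nf

/-- With positive probability every initial vote within distance `t` of `i` is wrong, which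
forces `i` to vote wrong at time `t`. -/
lemma IndepSignInputs.measure_wrongEvent_pos [DecidableEq V] (h : IndepSignInputs μ x c)
    (hdeg : ∀ v, 0 < G.degree v) (hinit : ∀ v, 0 < μ {ω | x v ω = -1})
    (t : ℕ) (i : V) : 0 < μ (wrongEvent G x c ∅ t i) := by
  have hx := h.indepFun.precomp (g := Sum.inl) Sum.inl_injective
  calc 0 < ∏ u ∈ ballFinset G t i, μ {ω | x u ω = -1} :=
        CanonicallyOrderedAdd.prod_pos.mpr fun u _ => hinit u
    _ = μ (⋂ u ∈ ballFinset G t i, {ω | x u ω = -1}) :=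
        (hx.meas_biInter fun u _ => ⟨{-1}, measurableSet_singleton _, rfl⟩).symm
    _ ≤ μ (wrongEvent G x c ∅ t i) :=
        measure_mono fun ω hω => frozenDyn_empty_eq_neg_one_of_ball hdeg (by simpa using hω)

lemma IndepSignInputs.neg (h : IndepSignInputs μ x c) :
    IndepSignInputs μ (fun v ω => -x v ω) (fun t v ω => -c t v ω) where
  measurable_x v := (h.measurable_x v).neg
  measurable_c t v := (h.measurable_c t v).neg
  x_eq v ω := by rcases h.x_eq v ω with h | h <;> simp [h]
  c_eq t v ω := by rcases h.c_eq t v ω with h | h <;> simp [h]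
  indepFun := by
    have := h.indepFun.comp (fun _ z => -z) fun _ => measurable_from_top
    convert this using 1
    funext a
    cases a <;> rfl

lemma IndepSignInputs.measure_ne_one_bounds [DecidableEq V] {y : ℕ → V → Ω → ℤ}
    (h : IndepSignInputs μ (y 0) c) (htree : G.IsTree) (hd : 0 < d)
    (hreg : ∀ v, G.degree v = d)
    (hupd : ∀ t v ω, y (t + 1) v ω = majorityUpdate (∑ j ∈ G.neighborFinset v, y t j ω) (c t v ω))
    {δ : ℝ} (hδ : 0 < δ) (hinit : ∀ v, (μ {ω | y 0 v ω = -1}).toReal = δ) (t : ℕ) (i : V) :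
    0 < μ {ω | y t i ω ≠ 1} ∧ μ {ω | y t i ω ≠ 1} ≤
      ENNReal.ofReal (2 * powRec δ ((d - 1).choose ((d - 1) / 2)) ((d - 1) / 2) t) := by
  have := h.indepFun.isProbabilityMeasure
  have hinit' : ∀ v, μ {ω | y 0 v ω = -1} = ENNReal.ofReal δ := fun v => by
    rw [← hinit v, ENNReal.ofReal_toReal (measure_ne_top _ _)]
  have hevent : {ω | y t i ω ≠ 1} = wrongEvent G (y 0) c ∅ t i := by
    ext ω
    have hy := eq_frozenDyn_empty (y := fun t v => y t v ω) (c := (c · · ω)) (hupd · · ω) t i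
    rcases frozenDyn_eq_one_or (G := G) (A := ∅) (h.x_eq · ω) (h.c_eq · · ω) t i with h' | h' <;>
      simp [wrongEvent, hy, h']
  rw [hevent]
  exact ⟨h.measure_wrongEvent_pos (by simp [hreg, hd]) (fun v => (hinit' v).symm ▸
      ENNReal.ofReal_pos.mpr hδ) t i,
    h.measure_wrongEvent_le htree hreg hδ.le (fun v => (hinit' v).le) t i⟩

/-- By the symmetry `σ ↦ -σ` of majority dynamics. -/
lemma IndepSignInputs.measure_ne_neg_one_bounds [DecidableEq V] {y : ℕ → V → Ω → ℤ}
    (h : IndepSignInputs μ (y 0) c) (htree : G.IsTree) (hd : 0 < d)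
    (hreg : ∀ v, G.degree v = d)
    (hupd : ∀ t v ω, y (t + 1) v ω = majorityUpdate (∑ j ∈ G.neighborFinset v, y t j ω) (c t v ω))
    {δ : ℝ} (hδ : 0 < δ) (hinit : ∀ v, (μ {ω | y 0 v ω = 1}).toReal = δ) (t : ℕ) (i : V) :
    0 < μ {ω | y t i ω ≠ -1} ∧ μ {ω | y t i ω ≠ -1} ≤
      ENNReal.ofReal (2 * powRec δ ((d - 1).choose ((d - 1) / 2)) ((d - 1) / 2) t) := by
  have hneg := h.neg.measure_ne_one_bounds (y := fun t v ω => -y t v ω) htree hd hreg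
    (fun t v ω => by simp only [hupd, sum_neg_distrib, majorityUpdate_neg]) hδ
    (fun v => by simpa [neg_eq_iff_eq_neg] using hinit v) t i
  simpa [neg_eq_iff_eq_neg] using hneg

end Random

lemma measure_ne_congr_ae {Ω : Type*} [MeasurableSpace Ω] {μ : Measure Ω} {f g : Ω → ℤ} {a : ℤ}
    (hg : ∀ᵐ ω ∂μ, g ω = a) : μ {ω | f ω ≠ g ω} = μ {ω | f ω ≠ a} :=
  measure_congr <| hg.mono fun ω hω => by
    change (f ω ≠ g ω) = (f ω ≠ a)
    rw [hω]

lemma neg_log_le_neg_log_toReal_of_mixture {Ω : Type*} [MeasurableSpace Ω] {μ μp μm : Measure Ω}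
    (hmix : μ = (2 : ENNReal)⁻¹ • μp + (2 : ENNReal)⁻¹ • μm) {E : Set Ω} {b : ℝ}
    (hpos : 0 < μp E) (hp : μp E ≤ ENNReal.ofReal b) (hm : μm E ≤ ENNReal.ofReal b) :
    -log b ≤ -log (μ E).toReal := by
  have hμE : μ E = 2⁻¹ * μp E + 2⁻¹ * μm E := by simp [hmix]
  have hle : μ E ≤ ENNReal.ofReal b := by
    calc μ E ≤ 2⁻¹ * ENNReal.ofReal b + 2⁻¹ * ENNReal.ofReal b := by rw [hμE]; gcongr
      _ = ENNReal.ofReal b := by rw [← add_mul, ENNReal.inv_two_add_inv_two, one_mul]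
  have hpos' : 0 < μ E := hμE ▸ (ENNReal.mul_pos (by simp) hpos.ne').trans_le le_self_add
  have hE : 0 < (μ E).toReal :=
    ENNReal.toReal_pos hpos'.ne' (ne_top_of_le_ne_top ENNReal.ofReal_ne_top hle)
  exact neg_le_neg <| log_le_log hE <|
    ENNReal.toReal_le_of_le_ofReal (ENNReal.ofReal_pos.mp (hpos.trans_le hp)).le hle

end MajorityDynamics

open MajorityDynamics

theorem majority_dynamics_doubly_exponential_general {V Ω : Type*} [MeasurableSpace Ω]
    (μ μp μm : Measure Ω)
    [IsProbabilityMeasure μp] [IsProbabilityMeasure μm]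
    (hmix : μ = (2 : ENNReal)⁻¹ • μp + (2 : ENNReal)⁻¹ • μm)
    (G : SimpleGraph V) [∀ v, Fintype (G.neighborSet v)]
    (d : ℕ) (hd : 5 ≤ d) (hreg : ∀ v, G.degree v = d) (htree : G.IsTree)
    (δ : ℝ) (hδpos : 0 < δ)
    (hδsmall : δ < (2 * Real.exp 1 * ((d : ℝ) - 1) / ((d : ℝ) - 2)) ^
      (-(((d : ℝ) - 2) / ((d : ℝ) - 4))))
    (s : Ω → ℤ) (hs : Measurable s)
    (hsp : μp {ω | s ω = 1} = 1) (hsm : μm {ω | s ω = -1} = 1)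
    (vote : ℕ → V → Ω → ℤ) (coin : ℕ → V → Ω → ℤ)
    (hmeas : ∀ t v, Measurable (vote t v))
    (hcmeas : ∀ t v, Measurable (coin t v))
    (hvals : ∀ v ω, vote 0 v ω = 1 ∨ vote 0 v ω = -1)
    (hcvals : ∀ t v ω, coin t v ω = 1 ∨ coin t v ω = -1)
    (hinitp : ∀ v, (μp {ω | vote 0 v ω = -1}).toReal = δ)
    (hinitm : ∀ v, (μm {ω | vote 0 v ω = 1}).toReal = δ)
    (hindp : iIndepFun
      (Sum.elim (fun v : V => vote 0 v) (fun p : ℕ × V => coin p.1 p.2)) μp)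
    (hindm : iIndepFun
      (Sum.elim (fun v : V => vote 0 v) (fun p : ℕ × V => coin p.1 p.2)) μm)
    (hupd : ∀ t v ω, vote (t + 1) v ω =
      if 0 < ∑ j ∈ G.neighborFinset v, vote t j ω then 1
      else if (∑ j ∈ G.neighborFinset v, vote t j ω) < 0 then -1
      else coin t v ω) :
    ∀ i : V, ∃ A > (0 : ℝ), ∃ B : ℝ, ∀ t : ℕ,
      A * (((d : ℝ) - 2) / 2) ^ t - B ≤
        -Real.log ((μ {ω | vote t i ω ≠ s ω}).toReal) := by
  classical
  intro i
  have hd0 : 0 < d := by omega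
  have hp := IndepSignInputs.measure_ne_one_bounds ⟨hmeas 0, hcmeas, hvals, hcvals, hindp⟩
    htree hd0 hreg hupd hδpos hinitp
  have hm := IndepSignInputs.measure_ne_neg_one_bounds ⟨hmeas 0, hcmeas, hvals, hcvals, hindm⟩
    htree hd0 hreg hupd hδpos hinitm
  have hsp' : ∀ᵐ ω ∂μp, s ω = 1 :=
    (ae_iff_measure_eq (hs (measurableSet_singleton 1)).nullMeasurableSet).mpr (by simp [hsp])
  have hsm' : ∀ᵐ ω ∂μm, s ω = -1 :=
    (ae_iff_measure_eq (hs (measurableSet_singleton (-1))).nullMeasurableSet).mpr (by simp [hsm])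
  obtain ⟨A, hA, L, hAL⟩ := exists_le_neg_log_powRec hd hδpos hδsmall
  refine ⟨A, hA, log 2 - L, fun t => ?_⟩
  have hlog := neg_log_le_neg_log_toReal_of_mixture hmix (E := {ω | vote t i ω ≠ s ω})
    (by rw [measure_ne_congr_ae hsp']; exact (hp t i).1)
    (by rw [measure_ne_congr_ae hsp']; exact (hp t i).2)
    (by rw [measure_ne_congr_ae hsm']; exact (hm t i).2)
  rw [log_mul two_ne_zero (powRec_pos hδpos (by exact_mod_cast Nat.choose_pos (by omega))
    _ t).ne'] at hlog
  linarith [hAL t]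

/-- Doubly exponential convergence of majority dynamics on an undirected
`d`-regular tree, `d ≥ 5`. The binary state `s ∈ {-1,+1}` has uniform prior
(the law `μ` is the even mixture of the conditional laws `μp`, `μm` given
`s = +1`, `s = -1`); initial votes are correct with probability `1-δ`,
independently given `s` (together with the fair tie-breaking coins); votes
evolve by majority of neighbors with fair-coin tie-breaking. If
`0 < δ < (2e(d-1)/(d-2))^{-(d-2)/(d-4)}`, then for every node `i`,
`-log P(σ̂_i(t) ≠ s) ∈ Ω(((d-2)/2)^t)`. -/
theorem majority_dynamics_doubly_exponential {V Ω : Type*} [MeasurableSpace Ω]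
    (μ μp μm : Measure Ω) [IsProbabilityMeasure μ]
    [IsProbabilityMeasure μp] [IsProbabilityMeasure μm]
    (hmix : μ = (2 : ENNReal)⁻¹ • μp + (2 : ENNReal)⁻¹ • μm)
    (G : SimpleGraph V) [DecidableRel G.Adj] [∀ v, Fintype (G.neighborSet v)]
    (d : ℕ) (hd : 5 ≤ d) (hreg : ∀ v, G.degree v = d) (htree : G.IsTree)
    (δ : ℝ) (hδpos : 0 < δ)
    (hδsmall : δ < (2 * Real.exp 1 * ((d : ℝ) - 1) / ((d : ℝ) - 2)) ^
      (-(((d : ℝ) - 2) / ((d : ℝ) - 4))))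
    (s : Ω → ℤ) (hs : Measurable s)
    (hsp : μp {ω | s ω = 1} = 1) (hsm : μm {ω | s ω = -1} = 1)
    (vote : ℕ → V → Ω → ℤ) (coin : ℕ → V → Ω → ℤ)
    (hmeas : ∀ t v, Measurable (vote t v))
    (hcmeas : ∀ t v, Measurable (coin t v))
    (hvals : ∀ v ω, vote 0 v ω = 1 ∨ vote 0 v ω = -1)
    (hcvals : ∀ t v ω, coin t v ω = 1 ∨ coin t v ω = -1)
    (hinitp : ∀ v, (μp {ω | vote 0 v ω = -1}).toReal = δ)
    (hinitm : ∀ v, (μm {ω | vote 0 v ω = 1}).toReal = δ)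
    (hcoinp : ∀ t v, (μp {ω | coin t v ω = 1}).toReal = 1 / 2)
    (hcoinm : ∀ t v, (μm {ω | coin t v ω = 1}).toReal = 1 / 2)
    (hindp : iIndepFun
      (Sum.elim (fun v : V => vote 0 v) (fun p : ℕ × V => coin p.1 p.2)) μp)
    (hindm : iIndepFun
      (Sum.elim (fun v : V => vote 0 v) (fun p : ℕ × V => coin p.1 p.2)) μm)
    (hupd : ∀ t v ω, vote (t + 1) v ω =
      if 0 < ∑ j ∈ G.neighborFinset v, vote t j ω then 1
      else if (∑ j ∈ G.neighborFinset v, vote t j ω) < 0 then -1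
      else coin t v ω) :
    ∀ i : V, ∃ A > (0 : ℝ), ∃ B : ℝ, ∀ t : ℕ,
      A * (((d : ℝ) - 2) / 2) ^ t - B ≤
        -Real.log ((μ {ω | vote t i ω ≠ s ω}).toReal) :=
  majority_dynamics_doubly_exponential_general μ μp μm hmix G d hd hreg htree δ hδpos hδsmall s hs
    hsp hsm vote coin hmeas hcmeas hvals hcvals hinitp hinitm hindp hindm hupd
end
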